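/- arXiv:1804.05317 — 10 statements merged into one kernel-verified Lean document; each statement's English description precedes it below -/
import Mathlib

section
/- Let E be a nonzero complex normed vector space and Λ a nonempty compact set (in the operator norm) of continuous linear functionals on E. Let ω, ω', ω'' ∈ E be nonzero vectors such that φ(ω) ≠ 0, φ(ω') ≠ 0 and φ(ω'') ≠ 0 for every φ ∈ Λ. Then (i) d_Λ(ω, ω') ≥ 0; (ii) d_Λ(ω, ω') = d_Λ(ω', ω); (iii) d_Λ(ω, ω'') ≤ d_Λ(ω, ω') + d_Λ(ω', ω''). In other words, d_Λ is a symmetric pseudo-metric (a symmetric weak metric). -/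
/-!
For a pair of functionals `p = (φ, φ')` write `r_p(ω, ω') = |φ ω · φ' ω'| / |φ ω' · φ' ω|`.
These cross ratios are multiplicative, `r_p(ω, ω'') = r_p(ω, ω') · r_p(ω', ω'')`, unchanged
when both `ω, ω'` and `φ, φ'` are swapped, and equal to `1` on the diagonal `φ = φ'`. Taking
suprema over the compact set `Λ × Λ` (on which `r_p` is continuous, hence bounded) and then
logarithms turns these into the triangle inequality, symmetry and nonnegativity of `d_Λ`.
-/

/-- The generalized Hilbert pseudo-metric associated to a set `Λ` of continuous
linear functionals on a complex normed space. -/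
noncomputable def hilbertD {E : Type*} [NormedAddCommGroup E] [NormedSpace ℂ E]
    (Λ : Set (E →L[ℂ] ℂ)) (ω ω' : E) : ℝ :=
  Real.log (sSup {r : ℝ | ∃ φ ∈ Λ, ∃ φ' ∈ Λ,
    r = ‖φ ω * φ' ω'‖ / ‖φ ω' * φ' ω‖})

namespace HilbertD

variable {E : Type*} [NormedAddCommGroup E] [NormedSpace ℂ E]

noncomputable def crossRatio (ω ω' : E) (p : (E →L[ℂ] ℂ) × (E →L[ℂ] ℂ)) : ℝ :=
  ‖p.1 ω * p.2 ω'‖ / ‖p.1 ω' * p.2 ω‖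

section CrossRatio

variable {ω ω' ω'' : E} {p : (E →L[ℂ] ℂ) × (E →L[ℂ] ℂ)}

theorem crossRatio_nonneg : 0 ≤ crossRatio ω ω' p := by
  unfold crossRatio
  positivity

theorem crossRatio_swap : crossRatio ω' ω p.swap = crossRatio ω ω' p := by
  simp only [crossRatio, Prod.fst_swap, Prod.snd_swap, mul_comm]

theorem crossRatio_diag {φ : E →L[ℂ] ℂ} (hω : φ ω ≠ 0) (hω' : φ ω' ≠ 0) :
    crossRatio ω ω' (φ, φ) = 1 := by
  rw [crossRatio, mul_comm (φ ω'), div_self]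
  simp [hω, hω']

theorem crossRatio_mul_crossRatio (h₁ : p.1 ω' ≠ 0) (h₂ : p.2 ω' ≠ 0) :
    crossRatio ω ω' p * crossRatio ω' ω'' p = crossRatio ω ω'' p := by
  have hn₁ : ‖p.1 ω'‖ ≠ 0 := norm_ne_zero_iff.2 h₁
  have hn₂ : ‖p.2 ω'‖ ≠ 0 := norm_ne_zero_iff.2 h₂
  simp only [crossRatio, norm_mul]
  field_simp

theorem continuousAt_crossRatio (h₁ : p.1 ω' ≠ 0) (h₂ : p.2 ω ≠ 0) :
    ContinuousAt (crossRatio ω ω') p := by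
  have eval : ∀ x : E, Continuous fun q : E →L[ℂ] ℂ => q x :=
    fun x => (ContinuousLinearMap.apply ℂ ℂ x).continuous
  refine ContinuousAt.div ?_ ?_ (by simpa using ⟨h₁, h₂⟩)
  · exact (((eval ω).comp continuous_fst).mul ((eval ω').comp continuous_snd)).norm.continuousAt
  · exact (((eval ω').comp continuous_fst).mul ((eval ω).comp continuous_snd)).norm.continuousAt

end CrossRatio

theorem hilbertD_eq_log_sSup (Λ : Set (E →L[ℂ] ℂ)) (ω ω' : E) :
    hilbertD Λ ω ω' = Real.log (sSup (crossRatio ω ω' '' Λ ×ˢ Λ)) := by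
  unfold hilbertD crossRatio
  congr 2
  ext r
  simp [eq_comm, and_assoc]

theorem hilbertD_comm (Λ : Set (E →L[ℂ] ℂ)) (ω ω' : E) :
    hilbertD Λ ω ω' = hilbertD Λ ω' ω := by
  have hswap : crossRatio ω' ω '' (Prod.swap '' Λ ×ˢ Λ) = crossRatio ω ω' '' Λ ×ˢ Λ := by
    simp only [Set.image_image, crossRatio_swap]
  rw [Set.image_swap_prod] at hswap
  rw [hilbertD_eq_log_sSup, hilbertD_eq_log_sSup, hswap]

section Compact

variable {Λ : Set (E →L[ℂ] ℂ)} {ω ω' ω'' : E}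

theorem isCompact_image_crossRatio (hΛ : IsCompact Λ)
    (hω : ∀ φ ∈ Λ, φ ω ≠ 0) (hω' : ∀ φ ∈ Λ, φ ω' ≠ 0) :
    IsCompact (crossRatio ω ω' '' Λ ×ˢ Λ) :=
  (hΛ.prod hΛ).image_of_continuousOn <| continuousOn_of_forall_continuousAt
    fun p hp => continuousAt_crossRatio (hω' p.1 hp.1) (hω p.2 hp.2)

theorem one_le_sSup_image_crossRatio (hΛ : IsCompact Λ) (hΛne : Λ.Nonempty)
    (hω : ∀ φ ∈ Λ, φ ω ≠ 0) (hω' : ∀ φ ∈ Λ, φ ω' ≠ 0) :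
    1 ≤ sSup (crossRatio ω ω' '' Λ ×ˢ Λ) := by
  obtain ⟨φ, hφ⟩ := hΛne
  refine le_csSup (isCompact_image_crossRatio hΛ hω hω').bddAbove ⟨(φ, φ), ⟨hφ, hφ⟩, ?_⟩
  exact crossRatio_diag (hω φ hφ) (hω' φ hφ)

theorem sSup_image_crossRatio_le_mul (hΛ : IsCompact Λ) (hΛne : Λ.Nonempty)
    (hω : ∀ φ ∈ Λ, φ ω ≠ 0) (hω' : ∀ φ ∈ Λ, φ ω' ≠ 0) (hω'' : ∀ φ ∈ Λ, φ ω'' ≠ 0) :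
    sSup (crossRatio ω ω'' '' Λ ×ˢ Λ) ≤
      sSup (crossRatio ω ω' '' Λ ×ˢ Λ) * sSup (crossRatio ω' ω'' '' Λ ×ˢ Λ) := by
  refine csSup_le ((hΛne.prod hΛne).image _) ?_
  rintro _ ⟨p, hp, rfl⟩
  rw [← crossRatio_mul_crossRatio (hω' p.1 hp.1) (hω' p.2 hp.2)]
  exact mul_le_mul
    (le_csSup (isCompact_image_crossRatio hΛ hω hω').bddAbove ⟨p, hp, rfl⟩)
    (le_csSup (isCompact_image_crossRatio hΛ hω' hω'').bddAbove ⟨p, hp, rfl⟩)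
    crossRatio_nonneg (zero_le_one.trans (one_le_sSup_image_crossRatio hΛ hΛne hω hω'))

theorem hilbertD_nonneg (hΛ : IsCompact Λ) (hΛne : Λ.Nonempty)
    (hω : ∀ φ ∈ Λ, φ ω ≠ 0) (hω' : ∀ φ ∈ Λ, φ ω' ≠ 0) :
    0 ≤ hilbertD Λ ω ω' := by
  rw [hilbertD_eq_log_sSup]
  exact Real.log_nonneg (one_le_sSup_image_crossRatio hΛ hΛne hω hω')

theorem hilbertD_triangle (hΛ : IsCompact Λ) (hΛne : Λ.Nonempty)
    (hω : ∀ φ ∈ Λ, φ ω ≠ 0) (hω' : ∀ φ ∈ Λ, φ ω' ≠ 0) (hω'' : ∀ φ ∈ Λ, φ ω'' ≠ 0) :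
    hilbertD Λ ω ω'' ≤ hilbertD Λ ω ω' + hilbertD Λ ω' ω'' := by
  have pos : ∀ {a b : E}, (∀ φ ∈ Λ, φ a ≠ 0) → (∀ φ ∈ Λ, φ b ≠ 0) →
      0 < sSup (crossRatio a b '' Λ ×ˢ Λ) :=
    fun ha hb => zero_lt_one.trans_le (one_le_sSup_image_crossRatio hΛ hΛne ha hb)
  simp only [hilbertD_eq_log_sSup]
  rw [← Real.log_mul (pos hω hω').ne' (pos hω' hω'').ne']
  exact Real.log_le_log (pos hω hω'') (sSup_image_crossRatio_le_mul hΛ hΛne hω hω' hω'')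

end Compact

end HilbertD

open HilbertD in
theorem hilbertD_pseudometric_general
    {E : Type*} [NormedAddCommGroup E] [NormedSpace ℂ E]
    (Λ : Set (E →L[ℂ] ℂ)) (hΛc : IsCompact Λ) (hΛne : Λ.Nonempty)
    (ω ω' ω'' : E)
    (h1 : ∀ φ ∈ Λ, φ ω ≠ 0) (h2 : ∀ φ ∈ Λ, φ ω' ≠ 0) (h3 : ∀ φ ∈ Λ, φ ω'' ≠ 0) :
    0 ≤ hilbertD Λ ω ω' ∧
    hilbertD Λ ω ω' = hilbertD Λ ω' ω ∧
    hilbertD Λ ω ω'' ≤ hilbertD Λ ω ω' + hilbertD Λ ω' ω'' :=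
  ⟨hilbertD_nonneg hΛc hΛne h1 h2, hilbertD_comm Λ ω ω', hilbertD_triangle hΛc hΛne h1 h2 h3⟩

theorem hilbertD_pseudometric
    {E : Type*} [NormedAddCommGroup E] [NormedSpace ℂ E] [Nontrivial E]
    (Λ : Set (E →L[ℂ] ℂ)) (hΛc : IsCompact Λ) (hΛne : Λ.Nonempty)
    (ω ω' ω'' : E) (hω : ω ≠ 0) (hω' : ω' ≠ 0) (hω'' : ω'' ≠ 0)
    (h1 : ∀ φ ∈ Λ, φ ω ≠ 0) (h2 : ∀ φ ∈ Λ, φ ω' ≠ 0) (h3 : ∀ φ ∈ Λ, φ ω'' ≠ 0) :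
    0 ≤ hilbertD Λ ω ω' ∧
    hilbertD Λ ω ω' = hilbertD Λ ω' ω ∧
    hilbertD Λ ω ω'' ≤ hilbertD Λ ω ω' + hilbertD Λ ω' ω'' :=
  hilbertD_pseudometric_general Λ hΛc hΛne ω ω' ω'' h1 h2 h3
end

section
/- Let E be a nonzero complex normed vector space, Λ a nonempty compact set of continuous linear functionals on E, and ω, ω' ∈ E nonzero vectors with φ(ω) ≠ 0 and φ(ω') ≠ 0 for every φ ∈ Λ. Then d_Λ(ω, ω') = 0 if and only if |φ(ω) · φ'(ω')| = |φ(ω') · φ'(ω)| for all φ, φ' ∈ Λ, i.e. d_Λ fails to separate ω and ω' exactly when every cross-ratio [φ, φ', ω, ω'] has modulus 1. -/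
/-!
Every ratio `‖φ ω · φ' ω'‖ / ‖φ ω' · φ' ω‖` is positive and swapping `φ, φ'` inverts it, so the set
of ratios is closed under inversion. Compactness of `Λ` bounds it above, so its supremum is at least
every ratio. Hence the logarithm of the supremum vanishes exactly when no ratio exceeds `1`, that is,
by the inversion symmetry, when every ratio equals `1`.
-/

open Set

theorem Real.log_sSup_eq_zero_iff_of_inv_mem {S : Set ℝ} (hS : BddAbove S)
    (hpos : ∀ r ∈ S, 0 < r) (hinv : ∀ r ∈ S, r⁻¹ ∈ S) :
    Real.log (sSup S) = 0 ↔ ∀ r ∈ S, r = 1 := by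
  constructor
  · intro hlog
    have hle : ∀ r ∈ S, r ≤ 1 := by
      intro r hr
      by_contra! hr1
      have hsup : 1 < sSup S := hr1.trans_le (le_csSup hS hr)
      exact (Real.log_pos hsup).ne' hlog
    intro r hr
    exact le_antisymm (hle r hr) ((inv_le_one₀ (hpos r hr)).mp (hle _ (hinv r hr)))
  · intro hone
    -- `S = ∅` is allowed: there `sSup S = 0` and `Real.log 0 = 0`.
    rcases subset_singleton_iff_eq.mp (hone : S ⊆ {1}) with hempty | hsingle
    · simp [hempty]
    · simp [hsingle]

section CrossRatio

variable {E : Type*} [NormedAddCommGroup E] [NormedSpace ℂ E]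

/-- The modulus of the cross-ratio `[φ, φ', ω, ω']`. -/
noncomputable def crossRatioNorm (ω ω' : E) (φ φ' : E →L[ℂ] ℂ) : ℝ :=
  ‖φ ω * φ' ω'‖ / ‖φ ω' * φ' ω‖

theorem hilbertD_eq_log_sSup_image2 (Λ : Set (E →L[ℂ] ℂ)) (ω ω' : E) :
    hilbertD Λ ω ω' = Real.log (sSup (image2 (crossRatioNorm ω ω') Λ Λ)) := by
  simp only [hilbertD, image2, crossRatioNorm, eq_comm]

theorem crossRatioNorm_swap (ω ω' : E) (φ φ' : E →L[ℂ] ℂ) :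
    crossRatioNorm ω ω' φ' φ = (crossRatioNorm ω ω' φ φ')⁻¹ := by
  rw [crossRatioNorm, crossRatioNorm, inv_div, mul_comm (φ' ω), mul_comm (φ' ω')]

theorem crossRatioNorm_pos {ω ω' : E} {φ φ' : E →L[ℂ] ℂ} (hφ : φ ω ≠ 0) (hφ' : φ' ω' ≠ 0)
    (hφω' : φ ω' ≠ 0) (hφ'ω : φ' ω ≠ 0) : 0 < crossRatioNorm ω ω' φ φ' :=
  div_pos (norm_pos_iff.mpr (mul_ne_zero hφ hφ')) (norm_pos_iff.mpr (mul_ne_zero hφω' hφ'ω))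

theorem crossRatioNorm_eq_one_iff {ω ω' : E} {φ φ' : E →L[ℂ] ℂ} (hφω' : φ ω' ≠ 0)
    (hφ'ω : φ' ω ≠ 0) :
    crossRatioNorm ω ω' φ φ' = 1 ↔ ‖φ ω * φ' ω'‖ = ‖φ ω' * φ' ω‖ :=
  div_eq_one_iff_eq (norm_ne_zero_iff.mpr (mul_ne_zero hφω' hφ'ω))

theorem bddAbove_image2_crossRatioNorm {Λ : Set (E →L[ℂ] ℂ)} (hΛ : IsCompact Λ) {ω ω' : E}
    (hω : ∀ φ ∈ Λ, φ ω ≠ 0) (hω' : ∀ φ ∈ Λ, φ ω' ≠ 0) :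
    BddAbove (image2 (crossRatioNorm ω ω') Λ Λ) := by
  have hcont : ContinuousOn (Function.uncurry (crossRatioNorm ω ω')) (Λ ×ˢ Λ) := by
    refine ContinuousOn.div (by fun_prop) (by fun_prop) ?_
    rintro ⟨φ, φ'⟩ ⟨hφ, hφ'⟩
    exact norm_ne_zero_iff.mpr (mul_ne_zero (hω' φ hφ) (hω φ' hφ'))
  rw [← image_uncurry_prod]
  exact ((hΛ.prod hΛ).image_of_continuousOn hcont).bddAbove

end CrossRatio

theorem hilbertD_eq_zero_iff_general
    {E : Type*} [NormedAddCommGroup E] [NormedSpace ℂ E]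
    (Λ : Set (E →L[ℂ] ℂ)) (hΛc : IsCompact Λ)
    (ω ω' : E)
    (h1 : ∀ φ ∈ Λ, φ ω ≠ 0) (h2 : ∀ φ ∈ Λ, φ ω' ≠ 0) :
    hilbertD Λ ω ω' = 0 ↔
      ∀ φ ∈ Λ, ∀ φ' ∈ Λ,
        ‖φ ω * φ' ω'‖ = ‖φ ω' * φ' ω‖ := by
  have hpos : ∀ r ∈ image2 (crossRatioNorm ω ω') Λ Λ, 0 < r :=
    forall_mem_image2.mpr fun φ hφ φ' hφ' =>
      crossRatioNorm_pos (h1 φ hφ) (h2 φ' hφ') (h2 φ hφ) (h1 φ' hφ')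
  have hinv : ∀ r ∈ image2 (crossRatioNorm ω ω') Λ Λ, r⁻¹ ∈ image2 (crossRatioNorm ω ω') Λ Λ :=
    forall_mem_image2.mpr fun φ hφ φ' hφ' =>
      crossRatioNorm_swap ω ω' φ φ' ▸ mem_image2_of_mem hφ' hφ
  rw [hilbertD_eq_log_sSup_image2, Real.log_sSup_eq_zero_iff_of_inv_mem
    (bddAbove_image2_crossRatioNorm hΛc h1 h2) hpos hinv, forall_mem_image2]
  exact forall₂_congr fun φ hφ => forall₂_congr fun φ' hφ' =>
    crossRatioNorm_eq_one_iff (h2 φ hφ) (h1 φ' hφ')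

theorem hilbertD_eq_zero_iff
    {E : Type*} [NormedAddCommGroup E] [NormedSpace ℂ E] [Nontrivial E]
    (Λ : Set (E →L[ℂ] ℂ)) (hΛc : IsCompact Λ) (hΛne : Λ.Nonempty)
    (ω ω' : E) (hω : ω ≠ 0) (hω' : ω' ≠ 0)
    (h1 : ∀ φ ∈ Λ, φ ω ≠ 0) (h2 : ∀ φ ∈ Λ, φ ω' ≠ 0) :
    hilbertD Λ ω ω' = 0 ↔
      ∀ φ ∈ Λ, ∀ φ' ∈ Λ,
        ‖φ ω * φ' ω'‖ = ‖φ ω' * φ' ω‖ :=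
  hilbertD_eq_zero_iff_general Λ hΛc ω ω' h1 h2
end

section
/- Let Λ ⊆ ℂ be a nonempty set and let ω, ω' be two distinct points of ℂ \ Λ. Then the following are equivalent: (a) for all a, b ∈ Λ, |(a − ω)·(b − ω')| = |(a − ω')·(b − ω)|; (b) either there exist c ∈ ℂ and r > 0 such that |a − c| = r for all a ∈ Λ and (ω − c) · conj(ω' − c) = r², or there exist q ∈ ℂ and e ∈ ℂ with |e| = 1 such that Λ ⊆ { q + t·e : t ∈ ℝ } and ω' = q + e² · conj(ω − q). That is, all cross-ratios [a, b, ω, ω'] have modulus 1 exactly when Λ is contained in a circle with respect to which ω and ω' are inverse points, or in a real line with respect to which ω and ω' are mirror images. -/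
/-!
Both conditions say that `a ↦ ‖a - ω‖ / ‖a - ω'‖` is constant, equal to some `k > 0`, on `Λ`:
for (a) this is the cross-ratio condition with `b` fixed, and the locus `‖z - ω‖ = k ‖z - ω'‖`
is the Apollonius circle of `ω, ω'` with ratio `k`, for which `ω` and `ω'` are inverse points,
degenerating for `k = 1` into the perpendicular bisector of `ω ω'`, in which they are mirror images.
-/

open Complex ComplexConjugate

theorem forall_mul_eq_mul_iff_exists_eq_mul {α K : Type*} [Field K] {s : Set α} {f g : α → K}
    {a₀ : α} (ha₀ : a₀ ∈ s) (hg : g a₀ ≠ 0) :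
    (∀ a ∈ s, ∀ b ∈ s, f a * g b = g a * f b) ↔ ∃ k, ∀ a ∈ s, f a = k * g a := by
  constructor
  · intro h
    refine ⟨f a₀ / g a₀, fun a ha => ?_⟩
    field_simp
    linear_combination h a ha a₀ ha₀
  · rintro ⟨k, hk⟩ a ha b hb
    rw [hk a ha, hk b hb]
    ring

noncomputable def apolloniusCenter (ω ω' : ℂ) (k : ℝ) : ℂ := (ω - k ^ 2 * ω') / (1 - k ^ 2)

noncomputable def apolloniusRadius (ω ω' : ℂ) (k : ℝ) : ℝ := k * ‖ω - ω'‖ / |1 - k ^ 2|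

theorem apolloniusRadius_pos {ω ω' : ℂ} {k : ℝ} (hne : ω ≠ ω') (hk : 0 < k) (hk1 : k ^ 2 ≠ 1) :
    0 < apolloniusRadius ω ω' k := by
  unfold apolloniusRadius
  have : 0 < ‖ω - ω'‖ := norm_pos_iff.mpr (sub_ne_zero.mpr hne)
  have : 0 < |1 - k ^ 2| := abs_pos.mpr (sub_ne_zero.mpr (Ne.symm hk1))
  positivity

theorem apolloniusRadius_sq (ω ω' : ℂ) (k : ℝ) :
    (apolloniusRadius ω ω' k : ℂ) ^ 2 = k ^ 2 * ((ω - ω') * conj (ω - ω')) / (1 - k ^ 2) ^ 2 := by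
  rw [apolloniusRadius, mul_conj']
  norm_cast
  rw [div_pow, mul_pow, sq_abs]

theorem sub_apolloniusCenter_mul_conj {ω ω' : ℂ} {k : ℝ} (hk : k ^ 2 ≠ 1) :
    (ω - apolloniusCenter ω ω' k) * conj (ω' - apolloniusCenter ω ω' k) =
      (apolloniusRadius ω ω' k : ℂ) ^ 2 := by
  have h1 : (1 : ℂ) - (k : ℂ) ^ 2 ≠ 0 := by exact_mod_cast sub_ne_zero.mpr (Ne.symm hk)
  rw [apolloniusRadius_sq, apolloniusCenter]
  simp only [map_sub, map_div₀, map_mul, map_pow, conj_ofReal, map_one]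
  field_simp
  ring

theorem norm_sub_apolloniusCenter {z ω ω' : ℂ} {k : ℝ} (hk : 0 ≤ k) (hk1 : k ^ 2 ≠ 1)
    (h : ‖z - ω‖ = k * ‖z - ω'‖) : ‖z - apolloniusCenter ω ω' k‖ = apolloniusRadius ω ω' k := by
  have h1 : (1 : ℂ) - (k : ℂ) ^ 2 ≠ 0 := by exact_mod_cast sub_ne_zero.mpr (Ne.symm hk1)
  have hsq : (z - ω) * conj (z - ω) = k ^ 2 * ((z - ω') * conj (z - ω')) := by
    rw [mul_conj', mul_conj', h]; push_cast; ring
  have hC : (z - apolloniusCenter ω ω' k) * conj (z - apolloniusCenter ω ω' k) =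
      (apolloniusRadius ω ω' k : ℂ) ^ 2 := by
    rw [apolloniusRadius_sq, apolloniusCenter]
    simp only [map_sub, map_div₀, map_mul, map_pow, conj_ofReal, map_one] at hsq ⊢
    field_simp
    linear_combination (1 - (k : ℂ) ^ 2) * hsq
  rw [mul_conj'] at hC
  have hr : 0 ≤ apolloniusRadius ω ω' k := by unfold apolloniusRadius; positivity
  exact (pow_left_inj₀ (norm_nonneg _) hr two_ne_zero).mp (by exact_mod_cast hC)

theorem eq_ofReal_mul_of_re_mul_conj_eq_zero {u d : ℂ} (hd : d ≠ 0) (h : (u * conj d).re = 0) :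
    u = ((u * conj d).im / ‖d‖ : ℝ) * (I * d / ‖d‖) := by
  have hu : u * conj d = (u * conj d).im * I := by
    apply Complex.ext <;> simp [h]
  have hnd : (‖d‖ : ℂ) ≠ 0 := by exact_mod_cast norm_ne_zero_iff.mpr hd
  push_cast
  field_simp
  linear_combination (-u) * mul_conj' d + d * hu

noncomputable def perpBisectorDir (ω ω' : ℂ) : ℂ := I * (ω' - ω) / ‖ω' - ω‖

theorem norm_perpBisectorDir {ω ω' : ℂ} (hne : ω ≠ ω') : ‖perpBisectorDir ω ω'‖ = 1 := by
  rw [perpBisectorDir, norm_div, norm_mul, norm_I, one_mul, norm_real, norm_norm,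
    div_self (norm_ne_zero_iff.mpr (sub_ne_zero.mpr hne.symm))]

theorem exists_eq_midpoint_add_perpBisectorDir {z ω ω' : ℂ} (hne : ω ≠ ω')
    (h : ‖z - ω‖ = ‖z - ω'‖) : ∃ t : ℝ, z = (ω + ω') / 2 + t * perpBisectorDir ω ω' := by
  have horth : ((z - (ω + ω') / 2) * conj (ω' - ω)).re = 0 := by
    have h2 := congrArg (· ^ 2) h
    simp only [Complex.sq_norm, Complex.normSq_apply] at h2
    simp only [mul_re, sub_re, sub_im, add_re, add_im, div_re, div_im, conj_re, conj_im] at *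
    norm_num at *
    linarith
  exact ⟨_, eq_add_of_sub_eq'
    (eq_ofReal_mul_of_re_mul_conj_eq_zero (sub_ne_zero.mpr hne.symm) horth)⟩

theorem eq_midpoint_add_perpBisectorDir_sq_mul_conj {ω ω' : ℂ} (hne : ω ≠ ω') :
    ω' = (ω + ω') / 2 + perpBisectorDir ω ω' ^ 2 * conj (ω - (ω + ω') / 2) := by
  have hnd : (‖ω' - ω‖ : ℂ) ≠ 0 := by
    exact_mod_cast norm_ne_zero_iff.mpr (sub_ne_zero.mpr hne.symm)
  have hdd := mul_conj' (ω' - ω)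
  rw [perpBisectorDir, div_pow, mul_pow, I_sq]
  simp only [map_sub, map_div₀, map_add, map_ofNat] at hdd ⊢
  field_simp
  linear_combination (ω - ω') * hdd

theorem norm_sub_eq_div_mul_norm_sub_of_inverse {a c ω ω' : ℂ} {r : ℝ} (hr : r ≠ 0)
    (ha : ‖a - c‖ = r) (hinv : (ω - c) * conj (ω' - c) = (r : ℂ) ^ 2) :
    ‖a - ω‖ = ‖ω - c‖ / r * ‖a - ω'‖ := by
  have hac : (a - c) * conj (a - c) = (r : ℂ) ^ 2 := by rw [mul_conj', ha]
  -- both sides equal `(ω - c) * conj (a - c) - r ^ 2`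
  have hid : (ω - c) * conj (a - ω') = (ω - a) * conj (a - c) := by
    simp only [map_sub] at hac hinv ⊢
    linear_combination hac - hinv
  have hnorm := congrArg norm hid
  rw [norm_mul, norm_mul, Complex.norm_conj, Complex.norm_conj, ha, norm_sub_rev ω a] at hnorm
  field_simp
  linarith

theorem norm_sub_eq_norm_sub_of_reflection {a q e ω ω' : ℂ} {t : ℝ} (he : ‖e‖ = 1)
    (ha : a = q + t * e) (hrefl : ω' = q + e ^ 2 * conj (ω - q)) : ‖a - ω'‖ = ‖a - ω‖ := by
  have hee : e * conj e = 1 := by rw [mul_conj', he]; norm_num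
  have hid : a - ω' = e ^ 2 * conj (a - ω) := by
    rw [ha, hrefl]
    simp only [map_sub, map_add, map_mul, conj_ofReal]
    linear_combination (-(t : ℂ) * e) * hee
  rw [hid, norm_mul, norm_pow, he, Complex.norm_conj, one_pow, one_mul]

theorem separation_criterion_CP1
    (Λ : Set ℂ) (hΛne : Λ.Nonempty)
    (ω ω' : ℂ) (hω : ω ∉ Λ) (hω' : ω' ∉ Λ) (hne : ω ≠ ω') :
    (∀ a ∈ Λ, ∀ b ∈ Λ,
        ‖(a - ω) * (b - ω')‖ = ‖(a - ω') * (b - ω)‖) ↔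
      ((∃ c : ℂ, ∃ r : ℝ, 0 < r ∧ (∀ a ∈ Λ, ‖a - c‖ = r) ∧
          (ω - c) * (starRingEnd ℂ) (ω' - c) = (r : ℂ) ^ 2) ∨
        (∃ q e : ℂ, ‖e‖ = 1 ∧
          (∀ a ∈ Λ, ∃ t : ℝ, a = q + (t : ℂ) * e) ∧
          ω' = q + e ^ 2 * (starRingEnd ℂ) (ω - q))) := by
  obtain ⟨a₀, ha₀⟩ := hΛne
  have hωa₀ : 0 < ‖a₀ - ω‖ := norm_pos_iff.mpr (sub_ne_zero.mpr fun h => hω (h ▸ ha₀))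
  have hω'a₀ : ‖a₀ - ω'‖ ≠ 0 := norm_ne_zero_iff.mpr (sub_ne_zero.mpr fun h => hω' (h ▸ ha₀))
  simp only [norm_mul]
  rw [forall_mul_eq_mul_iff_exists_eq_mul (f := (‖· - ω‖)) (g := (‖· - ω'‖)) ha₀ hω'a₀]
  constructor
  · rintro ⟨k, hk⟩
    have hk0 : 0 < k := pos_of_mul_pos_left (hk a₀ ha₀ ▸ hωa₀) (norm_nonneg _)
    by_cases hk1 : k = 1
    · subst hk1
      exact Or.inr ⟨(ω + ω') / 2, perpBisectorDir ω ω', norm_perpBisectorDir hne,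
        fun a ha => exists_eq_midpoint_add_perpBisectorDir hne (by simpa using hk a ha),
        eq_midpoint_add_perpBisectorDir_sq_mul_conj hne⟩
    · have hk2 : k ^ 2 ≠ 1 := by rwa [Ne, pow_eq_one_iff_of_nonneg hk0.le two_ne_zero]
      exact Or.inl ⟨apolloniusCenter ω ω' k, apolloniusRadius ω ω' k,
        apolloniusRadius_pos hne hk0 hk2,
        fun a ha => norm_sub_apolloniusCenter hk0.le hk2 (hk a ha),
        sub_apolloniusCenter_mul_conj hk2⟩
  · rintro (⟨c, r, hr, hΛc, hinv⟩ | ⟨q, e, he, hΛl, hrefl⟩)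
    · exact ⟨‖ω - c‖ / r,
        fun a ha => norm_sub_eq_div_mul_norm_sub_of_inverse hr.ne' (hΛc a ha) hinv⟩
    · refine ⟨1, fun a ha => ?_⟩
      obtain ⟨t, ht⟩ := hΛl a ha
      rw [one_mul, norm_sub_eq_norm_sub_of_reflection he ht hrefl]
end

section
/- Let Λ ⊆ ℂ be a nonempty compact set that is not contained in any circle { z : |z − c| = r } (c ∈ ℂ, r > 0) and not contained in any real-affine line { q + t·e : t ∈ ℝ } (q, e ∈ ℂ, e ≠ 0). Then for all distinct ω, ω' ∈ ℂ \ Λ there exist a, b ∈ Λ with |(a − ω)·(b − ω')| ≠ |(a − ω')·(b − ω)|; consequently d_Λ(ω, ω') > 0, so d_Λ separates the points of ℂ \ Λ. -/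
/-- The generalized Hilbert pseudo-metric on the complement of a set `Λ ⊆ ℂ`,
where a point `a ∈ Λ` is identified with the linear form `z ↦ z - a`. -/
noncomputable def hilbertDC (Λ : Set ℂ) (ω ω' : ℂ) : ℝ :=
  Real.log (sSup {r : ℝ | ∃ a ∈ Λ, ∃ b ∈ Λ,
    r = ‖(a - ω) * (b - ω')‖ / ‖(a - ω') * (b - ω)‖})

/-!
If `‖(a - ω) * (b - ω')‖ = ‖(a - ω') * (b - ω)‖` for all `a, b ∈ Λ`, then the ratio
`‖a - ω‖ / ‖a - ω'‖` is a constant `k` on `Λ`, so `Λ` lies on an Apollonius set of `ω, ω'`: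
the perpendicular bisector of `[ω, ω']` if `k = 1`, and otherwise the circle with centre
`(ω - k² ω') / (1 - k²)` and radius `k ‖ω - ω'‖ / |1 - k²|`. Hence some cross-ratio modulus
differs from `1`; swapping `a` and `b` inverts it, so one exceeds `1`, and since the ratios are
bounded (compactness of `Λ`) their supremum exceeds `1` too.
-/

section Apollonius

variable {E : Type*} [NormedAddCommGroup E] [InnerProductSpace ℝ E]

theorem norm_sub_sub_sq_smul_sub {x y z : E} {k : ℝ} (hk : 0 ≤ k)
    (h : ‖z - x‖ = k * ‖z - y‖) : ‖(z - x) - k ^ 2 • (z - y)‖ = k * ‖x - y‖ := by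
  rw [← sq_eq_sq₀ (norm_nonneg _) (by positivity), ← sub_sub_sub_cancel_left y x z,
    mul_pow, norm_sub_sq_real, norm_sub_sq_real (z - y), norm_smul, inner_smul_right,
    Real.norm_of_nonneg (by positivity), real_inner_comm]
  linear_combination (1 - k ^ 2) * congrArg (· ^ 2) h

theorem norm_sub_eq_of_norm_sub_eq_mul_norm_sub {x y z : E} {k : ℝ} (hk : 0 ≤ k) (hk1 : k ≠ 1)
    (h : ‖z - x‖ = k * ‖z - y‖) :
    ‖z - (1 - k ^ 2)⁻¹ • (x - k ^ 2 • y)‖ = k * ‖x - y‖ / |1 - k ^ 2| := by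
  have hu : 1 - k ^ 2 ≠ 0 := by
    rw [sub_ne_zero, ne_comm, Ne, pow_eq_one_iff_of_nonneg hk two_ne_zero]; exact hk1
  have hz : z - (1 - k ^ 2)⁻¹ • (x - k ^ 2 • y) = (1 - k ^ 2)⁻¹ • ((z - x) - k ^ 2 • (z - y)) := by
    match_scalars <;> field_simp
  rw [hz, norm_smul, norm_sub_sub_sq_smul_sub hk h, norm_inv, Real.norm_eq_abs, inv_mul_eq_div]

end Apollonius

open Complex

theorem Complex.exists_eq_midpoint_add_mul_I_of_norm_sub_eq {x y z : ℂ} (hxy : x ≠ y)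
    (h : ‖z - x‖ = ‖z - y‖) : ∃ t : ℝ, z = (x + y) / 2 + t * (I * (y - x)) := by
  have he : I * (y - x) ≠ 0 := mul_ne_zero I_ne_zero (sub_ne_zero.2 hxy.symm)
  have hn : normSq (z - x) = normSq (z - y) := by
    rw [← Complex.sq_norm, ← Complex.sq_norm, h]
  set w := (z - (x + y) / 2) / (I * (y - x))
  have him : w.im = 0 := by
    rw [div_im, ← sub_div, div_eq_zero_iff]
    left
    simp only [normSq_apply, sub_re, sub_im] at hn
    simp only [sub_re, sub_im, add_re, add_im, mul_re, mul_im, I_re, I_im, div_ofNat_re,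
      div_ofNat_im, zero_mul, one_mul, zero_add, zero_sub, neg_sub]
    linear_combination -hn / 2
  refine ⟨w.re, ?_⟩
  have hw : (w.re : ℂ) = w := Complex.ext (by simp) (by simp [him])
  rw [hw, div_mul_cancel₀ _ he]
  ring

theorem exists_circle_or_line_of_norm_sub_eq_mul_norm_sub {Λ : Set ℂ} {ω ω' : ℂ} {k : ℝ}
    (hωω' : ω ≠ ω') (hk : 0 < k) (h : ∀ a ∈ Λ, ‖a - ω‖ = k * ‖a - ω'‖) :
    (∃ (c : ℂ) (r : ℝ), 0 < r ∧ ∀ a ∈ Λ, ‖a - c‖ = r) ∨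
      ∃ (q e : ℂ), e ≠ 0 ∧ ∀ a ∈ Λ, ∃ t : ℝ, a = q + (t : ℂ) * e := by
  rcases eq_or_ne k 1 with rfl | hk1
  · refine Or.inr ⟨(ω + ω') / 2, I * (ω' - ω), mul_ne_zero I_ne_zero (sub_ne_zero.2 hωω'.symm),
      fun a ha => exists_eq_midpoint_add_mul_I_of_norm_sub_eq hωω' (one_mul ‖a - ω'‖ ▸ h a ha)⟩
  · have hu : 1 - k ^ 2 ≠ 0 := by
      rw [sub_ne_zero, ne_comm, Ne, pow_eq_one_iff_of_nonneg hk.le two_ne_zero]; exact hk1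
    refine Or.inl ⟨_, _, ?_, fun a ha => norm_sub_eq_of_norm_sub_eq_mul_norm_sub hk.le hk1 (h a ha)⟩
    exact div_pos (mul_pos hk (norm_pos_iff.2 (sub_ne_zero.2 hωω'))) (abs_pos.2 hu)

theorem exists_norm_mul_ne_of_not_circle_not_line {Λ : Set ℂ} {ω ω' : ℂ} (hΛ : Λ.Nonempty)
    (hω : ω ∉ Λ) (hω' : ω' ∉ Λ) (hωω' : ω ≠ ω')
    (hcircle : ¬ ∃ (c : ℂ) (r : ℝ), 0 < r ∧ ∀ a ∈ Λ, ‖a - c‖ = r)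
    (hline : ¬ ∃ (q e : ℂ), e ≠ 0 ∧ ∀ a ∈ Λ, ∃ t : ℝ, a = q + (t : ℂ) * e) :
    ∃ a ∈ Λ, ∃ b ∈ Λ, ‖(a - ω) * (b - ω')‖ ≠ ‖(a - ω') * (b - ω)‖ := by
  by_contra! h
  obtain ⟨b, hb⟩ := hΛ
  have hbω : 0 < ‖b - ω‖ := norm_pos_iff.2 (sub_ne_zero.2 (ne_of_mem_of_not_mem hb hω))
  have hbω' : 0 < ‖b - ω'‖ := norm_pos_iff.2 (sub_ne_zero.2 (ne_of_mem_of_not_mem hb hω'))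
  have hk : ∀ a ∈ Λ, ‖a - ω‖ = ‖b - ω‖ / ‖b - ω'‖ * ‖a - ω'‖ := fun a ha => by
    have hab := h a ha b hb
    rw [norm_mul, norm_mul] at hab
    field_simp
    linarith
  rcases exists_circle_or_line_of_norm_sub_eq_mul_norm_sub hωω' (div_pos hbω hbω') hk with hc | hl
  exacts [hcircle hc, hline hl]

def hilbertRatios (Λ : Set ℂ) (ω ω' : ℂ) : Set ℝ :=
  {r : ℝ | ∃ a ∈ Λ, ∃ b ∈ Λ, r = ‖(a - ω) * (b - ω')‖ / ‖(a - ω') * (b - ω)‖}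

section HilbertRatios

variable {Λ : Set ℂ} {ω ω' : ℂ}

theorem norm_sub_mul_sub_pos {a b : ℂ} (ha : a ∈ Λ) (hb : b ∈ Λ) (hω : ω ∉ Λ) (hω' : ω' ∉ Λ) :
    0 < ‖(a - ω) * (b - ω')‖ :=
  norm_pos_iff.2 (mul_ne_zero (sub_ne_zero.2 (ne_of_mem_of_not_mem ha hω))
    (sub_ne_zero.2 (ne_of_mem_of_not_mem hb hω')))

theorem bddAbove_hilbertRatios (hΛ : IsCompact Λ) (hω : ω ∉ Λ) (hω' : ω' ∉ Λ) :
    BddAbove (hilbertRatios Λ ω ω') := by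
  have himage : hilbertRatios Λ ω ω' = (fun p : ℂ × ℂ =>
      ‖(p.1 - ω) * (p.2 - ω')‖ / ‖(p.1 - ω') * (p.2 - ω)‖) '' Λ ×ˢ Λ := by
    ext r
    simp [hilbertRatios, eq_comm, and_assoc]
  rw [himage]
  refine ((hΛ.prod hΛ).image_of_continuousOn
    (ContinuousOn.div (by fun_prop) (by fun_prop) ?_)).bddAbove
  rintro ⟨a, b⟩ ⟨ha, hb⟩
  exact (norm_sub_mul_sub_pos ha hb hω' hω).ne'

theorem exists_one_lt_mem_hilbertRatios {a b : ℂ} (ha : a ∈ Λ) (hb : b ∈ Λ) (hω : ω ∉ Λ)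
    (hω' : ω' ∉ Λ) (hne : ‖(a - ω) * (b - ω')‖ ≠ ‖(a - ω') * (b - ω)‖) :
    ∃ r ∈ hilbertRatios Λ ω ω', 1 < r := by
  rcases hne.lt_or_gt with hlt | hgt
  · refine ⟨_, ⟨b, hb, a, ha, rfl⟩, ?_⟩
    rwa [one_lt_div (norm_sub_mul_sub_pos hb ha hω' hω), mul_comm, mul_comm (b - ω)]
  · refine ⟨_, ⟨a, ha, b, hb, rfl⟩, ?_⟩
    rwa [one_lt_div (norm_sub_mul_sub_pos ha hb hω' hω)]

theorem hilbertDC_pos {a b : ℂ} (hΛ : IsCompact Λ) (ha : a ∈ Λ) (hb : b ∈ Λ) (hω : ω ∉ Λ)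
    (hω' : ω' ∉ Λ) (hne : ‖(a - ω) * (b - ω')‖ ≠ ‖(a - ω') * (b - ω)‖) :
    0 < hilbertDC Λ ω ω' := by
  obtain ⟨r, hr, hr1⟩ := exists_one_lt_mem_hilbertRatios ha hb hω hω' hne
  show 0 < Real.log (sSup (hilbertRatios Λ ω ω'))
  exact Real.log_pos (hr1.trans_le (le_csSup (bddAbove_hilbertRatios hΛ hω hω') hr))

end HilbertRatios

theorem separating_of_not_circle_not_line
    (Λ : Set ℂ) (hΛne : Λ.Nonempty) (hΛc : IsCompact Λ)
    (hcircle : ¬ ∃ (c : ℂ) (r : ℝ), 0 < r ∧ ∀ a ∈ Λ, ‖a - c‖ = r)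
    (hline : ¬ ∃ (q e : ℂ), e ≠ 0 ∧ ∀ a ∈ Λ, ∃ t : ℝ, a = q + (t : ℂ) * e) :
    ∀ ω ω' : ℂ, ω ∉ Λ → ω' ∉ Λ → ω ≠ ω' →
      (∃ a ∈ Λ, ∃ b ∈ Λ,
        ‖(a - ω) * (b - ω')‖ ≠ ‖(a - ω') * (b - ω)‖) ∧
      0 < hilbertDC Λ ω ω' := by
  intro ω ω' hω hω' hωω'
  obtain ⟨a, ha, b, hb, hne⟩ :=
    exists_norm_mul_ne_of_not_circle_not_line hΛne hω hω' hωω' hcircle hline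
  exact ⟨⟨a, ha, b, hb, hne⟩, hilbertDC_pos hΛc ha hb hω hω' hne⟩
end

section
/- Let E be a nonzero finite-dimensional complex normed vector space, Λ a nonempty compact set of continuous linear functionals on E, and ω ∈ E a nonzero vector with φ(ω) ≠ 0 for every φ ∈ Λ. Let v ∈ E. Then the function t ↦ d_Λ(ω, ω + t·v), which is defined for all sufficiently small t ≥ 0, has right derivative at t = 0 equal to sSup { Re( φ'(v)/φ'(ω) − φ(v)/φ(ω) ) : φ, φ' ∈ Λ }; i.e. it satisfies HasDerivWithinAt with this value on Set.Ici 0 at 0. -/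
open Filter Topology Set

theorem hasDerivWithinAt_of_norm_sub_le_sq {𝕜 F : Type*} [NontriviallyNormedField 𝕜]
    [NormedAddCommGroup F] [NormedSpace 𝕜 F] {f : 𝕜 → F} {f' : F} {s : Set 𝕜} {x : 𝕜} {A : ℝ}
    (h : ∀ᶠ y in 𝓝[s] x, ‖f y - f x - (y - x) • f'‖ ≤ A * ‖y - x‖ ^ 2) :
    HasDerivWithinAt f f' s x := by
  rw [hasDerivWithinAt_iff_isLittleO]
  refine (Asymptotics.IsBigO.of_bound A ?_).trans_isLittleO
    ((Asymptotics.isLittleO_pow_sub_sub x one_lt_two).mono nhdsWithin_le_nhds)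
  filter_upwards [h] with y hy
  simpa using hy

section Supremum

variable {ι : Type*} {S : Set ι}

theorem bddAbove_image_of_abs_sub_le {f g : ι → ℝ} {B : ℝ}
    (hg : BddAbove (g '' S)) (h : ∀ i ∈ S, |f i - g i| ≤ B) : BddAbove (f '' S) := by
  obtain ⟨M, hM⟩ := hg
  refine ⟨M + B, forall_mem_image.2 fun i hi => ?_⟩
  linarith [hM (mem_image_of_mem g hi), (abs_le.1 (h i hi)).2]

theorem abs_csSup_image_sub_csSup_image_le {f g : ι → ℝ} {B : ℝ}
    (hS : S.Nonempty) (hg : BddAbove (g '' S)) (h : ∀ i ∈ S, |f i - g i| ≤ B) :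
    |sSup (f '' S) - sSup (g '' S)| ≤ B := by
  have hf := bddAbove_image_of_abs_sub_le hg h
  have hf_le : sSup (f '' S) ≤ sSup (g '' S) + B :=
    csSup_le (hS.image f) <| forall_mem_image.2 fun i hi => by
      linarith [le_csSup hg (mem_image_of_mem g hi), (abs_le.1 (h i hi)).2]
  have hg_le : sSup (g '' S) ≤ sSup (f '' S) + B :=
    csSup_le (hS.image g) <| forall_mem_image.2 fun i hi => by
      linarith [le_csSup hf (mem_image_of_mem f hi), (abs_le.1 (h i hi)).1]
  exact abs_le.2 ⟨by linarith, by linarith⟩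

theorem Real.mul_sSup_image_of_nonneg {a : ℝ} (ha : 0 ≤ a) (f : ι → ℝ) :
    a * sSup (f '' S) = sSup ((fun i => a * f i) '' S) := by
  rw [← smul_eq_mul, ← Real.sSup_smul_of_nonneg ha, ← image_smul, image_image]
  rfl

theorem Real.log_csSup_image {R : ι → ℝ} (hS : S.Nonempty)
    (hR : ∀ i ∈ S, 0 < R i) (hb : BddAbove ((fun i => Real.log (R i)) '' S)) :
    Real.log (sSup (R '' S)) = sSup ((fun i => Real.log (R i)) '' S) := by
  have hR_exp : R '' S = Real.exp '' ((fun i => Real.log (R i)) '' S) := by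
    rw [image_image]
    exact image_congr fun i hi => (Real.exp_log (hR i hi)).symm
  rw [hR_exp, ← Monotone.map_csSup_of_continuousAt Real.continuous_exp.continuousAt
    Real.exp_monotone (hS.image _) hb, Real.log_exp]

end Supremum

theorem setOf_exists_mem_exists_mem_eq_image_prod {α β γ : Type*} (s : Set α) (t : Set β) (f : α → β → γ) :
    {r | ∃ a ∈ s, ∃ b ∈ t, r = f a b} = (fun p : α × β => f p.1 p.2) '' s ×ˢ t := by
  ext
  simp [eq_comm]

theorem norm_one_add_pos_of_norm_lt_one {R : Type*} [SeminormedRing R] [NormOneClass R] {z : R}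
    (hz : ‖z‖ < 1) : 0 < ‖1 + z‖ := by
  have := norm_sub_le (1 + z) z
  rw [add_sub_cancel_right, norm_one] at this
  linarith

theorem Complex.abs_log_norm_one_add_sub_re_le {z : ℂ} (hz : ‖z‖ ≤ 1 / 2) :
    |Real.log ‖1 + z‖ - z.re| ≤ ‖z‖ ^ 2 := by
  have hz1 : ‖z‖ < 1 := hz.trans_lt (by norm_num)
  have hinv : (1 - ‖z‖)⁻¹ ≤ 2 := by
    rw [inv_le_comm₀ (by linarith) two_pos]
    linarith
  calc |Real.log ‖1 + z‖ - z.re| = |(Complex.log (1 + z) - z).re| := by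
        rw [Complex.sub_re, Complex.log_re]
    _ ≤ ‖Complex.log (1 + z) - z‖ := Complex.abs_re_le_norm _
    _ ≤ ‖z‖ ^ 2 * (1 - ‖z‖)⁻¹ / 2 := Complex.norm_log_one_add_sub_self_le hz1
    _ ≤ ‖z‖ ^ 2 := by nlinarith [sq_nonneg ‖z‖]

theorem Complex.abs_log_norm_div_one_add_sub_re_le {z w : ℂ} (hz : ‖z‖ ≤ 1 / 2)
    (hw : ‖w‖ ≤ 1 / 2) :
    |Real.log (‖1 + w‖ / ‖1 + z‖) - (w - z).re| ≤ ‖z‖ ^ 2 + ‖w‖ ^ 2 := by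
  have hne : ∀ u : ℂ, ‖u‖ ≤ 1 / 2 → ‖1 + u‖ ≠ 0 := fun u hu =>
    (norm_one_add_pos_of_norm_lt_one (hu.trans_lt (by norm_num))).ne'
  rw [Real.log_div (hne w hw) (hne z hz), Complex.sub_re]
  have hz' := Complex.abs_log_norm_one_add_sub_re_le hz
  have hw' := Complex.abs_log_norm_one_add_sub_re_le hw
  rw [abs_le] at *
  constructor <;> linarith

section HilbertMetric

variable {E : Type*} [NormedAddCommGroup E] [NormedSpace ℂ E]

theorem hilbertD_add_smul_eq {Λ : Set (E →L[ℂ] ℂ)} {ω : E} (hω : ∀ φ ∈ Λ, φ ω ≠ 0) (c : ℂ)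
    (v : E) :
    hilbertD Λ ω (ω + c • v) = Real.log (sSup ((fun p : (E →L[ℂ] ℂ) × (E →L[ℂ] ℂ) =>
      ‖1 + c * (p.2 v / p.2 ω)‖ / ‖1 + c * (p.1 v / p.1 ω)‖) '' Λ ×ˢ Λ)) := by
  have hsplit : ∀ φ ∈ Λ, φ (ω + c • v) = φ ω * (1 + c * (φ v / φ ω)) := fun φ hφ => by
    rw [map_add, map_smul, smul_eq_mul]
    field_simp [hω φ hφ]
  rw [hilbertD, setOf_exists_mem_exists_mem_eq_image_prod]
  congr 2
  refine image_congr fun p hp => ?_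
  have h₁ := norm_ne_zero_iff.2 (hω _ hp.1)
  have h₂ := norm_ne_zero_iff.2 (hω _ hp.2)
  simp only [hsplit _ hp.1, hsplit _ hp.2, norm_mul]
  field_simp

theorem abs_hilbertD_add_smul_sub_le {Λ : Set (E →L[ℂ] ℂ)} (hΛ : Λ.Nonempty) {ω : E}
    (hω : ∀ φ ∈ Λ, φ ω ≠ 0) {v : E} {K : ℝ} (hK : ∀ φ ∈ Λ, ‖φ v / φ ω‖ ≤ K) {t : ℝ}
    (ht : 0 ≤ t) (htK : t * K ≤ 1 / 2) :
    |hilbertD Λ ω (ω + (t : ℂ) • v)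
        - t * sSup {r : ℝ | ∃ φ ∈ Λ, ∃ φ' ∈ Λ, r = (φ' v / φ' ω - φ v / φ ω).re}|
      ≤ 2 * K ^ 2 * t ^ 2 := by
  set z : (E →L[ℂ] ℂ) → ℂ := fun φ => φ v / φ ω
  set D : (E →L[ℂ] ℂ) × (E →L[ℂ] ℂ) → ℝ := fun p => (z p.2 - z p.1).re
  set R : (E →L[ℂ] ℂ) × (E →L[ℂ] ℂ) → ℝ :=
    fun p => ‖1 + (t : ℂ) * z p.2‖ / ‖1 + (t : ℂ) * z p.1‖
  have htz : ∀ φ ∈ Λ, ‖(t : ℂ) * z φ‖ ≤ t * K := fun φ hφ => by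
    rw [norm_mul, Complex.norm_real, Real.norm_of_nonneg ht]
    exact mul_le_mul_of_nonneg_left (hK φ hφ) ht
  have hR : ∀ p ∈ Λ ×ˢ Λ, |Real.log (R p) - t * D p| ≤ 2 * K ^ 2 * t ^ 2 := fun p hp => by
    have h := Complex.abs_log_norm_div_one_add_sub_re_le ((htz _ hp.1).trans htK)
      ((htz _ hp.2).trans htK)
    rw [← mul_sub, Complex.re_ofReal_mul] at h
    nlinarith [htz _ hp.1, htz _ hp.2, norm_nonneg ((t : ℂ) * z p.1),
      norm_nonneg ((t : ℂ) * z p.2)]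
  have hR_pos : ∀ p ∈ Λ ×ˢ Λ, 0 < R p := fun p hp =>
    div_pos (norm_one_add_pos_of_norm_lt_one (((htz _ hp.2).trans htK).trans_lt (by norm_num)))
      (norm_one_add_pos_of_norm_lt_one (((htz _ hp.1).trans htK).trans_lt (by norm_num)))
  have htD : BddAbove ((fun p => t * D p) '' Λ ×ˢ Λ) := by
    refine ⟨t * (2 * K), forall_mem_image.2 fun p hp => mul_le_mul_of_nonneg_left ?_ ht⟩
    calc D p ≤ ‖z p.2 - z p.1‖ := Complex.re_le_norm _
      _ ≤ ‖z p.2‖ + ‖z p.1‖ := norm_sub_le _ _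
      _ ≤ 2 * K := by linarith [hK _ hp.1, hK _ hp.2]
  rw [hilbertD_add_smul_eq hω, setOf_exists_mem_exists_mem_eq_image_prod, Real.mul_sSup_image_of_nonneg ht,
    Real.log_csSup_image (hΛ.prod hΛ) hR_pos (bddAbove_image_of_abs_sub_le htD hR)]
  exact abs_csSup_image_sub_csSup_image_le (hΛ.prod hΛ) htD hR

end HilbertMetric

theorem hilbertD_right_deriv_finsler_general
    {E : Type*} [NormedAddCommGroup E] [NormedSpace ℂ E]
    (Λ : Set (E →L[ℂ] ℂ)) (hΛc : IsCompact Λ) (hΛne : Λ.Nonempty)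
    (ω : E) (h1 : ∀ φ ∈ Λ, φ ω ≠ 0) (v : E) :
    HasDerivWithinAt (fun t : ℝ => hilbertD Λ ω (ω + (t : ℂ) • v))
      (sSup {r : ℝ | ∃ φ ∈ Λ, ∃ φ' ∈ Λ,
        r = (φ' v / φ' ω - φ v / φ ω).re})
      (Set.Ici 0) 0 := by
  obtain ⟨K, hK⟩ := hΛc.exists_bound_of_continuousOn (f := fun φ => φ v / φ ω)
    (by fun_prop (disch := assumption))
  have hsmall : ∀ᶠ t in 𝓝[≥] (0 : ℝ), 0 ≤ t ∧ t * K ≤ 1 / 2 := by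
    have hK0 : Tendsto (fun t : ℝ => t * K) (𝓝 0) (𝓝 0) := by
      simpa using (tendsto_id (x := 𝓝 (0 : ℝ))).mul_const K
    filter_upwards [self_mem_nhdsWithin, nhdsWithin_le_nhds
      (hK0.eventually (eventually_le_nhds (by norm_num : (0 : ℝ) < 1 / 2)))] with t ht htK
    exact ⟨ht, htK⟩
  have hquad := hsmall.mono fun t ht => abs_hilbertD_add_smul_sub_le hΛne h1 hK ht.1 ht.2
  have h0 : hilbertD Λ ω ω = 0 := by
    simpa using hquad.self_of_nhdsWithin self_mem_Ici
  refine hasDerivWithinAt_of_norm_sub_le_sq (A := 2 * K ^ 2) ?_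
  filter_upwards [hquad] with t ht
  simpa only [Complex.ofReal_zero, zero_smul, add_zero, h0, sub_zero, smul_eq_mul,
    Real.norm_eq_abs, sq_abs] using ht

theorem hilbertD_right_deriv_finsler
    {E : Type*} [NormedAddCommGroup E] [NormedSpace ℂ E] [Nontrivial E]
    [FiniteDimensional ℂ E]
    (Λ : Set (E →L[ℂ] ℂ)) (hΛc : IsCompact Λ) (hΛne : Λ.Nonempty)
    (ω : E) (hω : ω ≠ 0) (h1 : ∀ φ ∈ Λ, φ ω ≠ 0) (v : E) :
    HasDerivWithinAt (fun t : ℝ => hilbertD Λ ω (ω + (t : ℂ) • v))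
      (sSup {r : ℝ | ∃ φ ∈ Λ, ∃ φ' ∈ Λ,
        r = (φ' v / φ' ω - φ v / φ ω).re})
      (Set.Ici 0) 0 :=
  hilbertD_right_deriv_finsler_general Λ hΛc hΛne ω h1 v
end

section
/- Let E be a nonzero finite-dimensional complex normed vector space, Λ a nonempty compact set of continuous linear functionals on E, and ω ∈ E a nonzero vector with φ(ω) ≠ 0 for every φ ∈ Λ. Define N(v) = sSup { Re( φ'(v)/φ'(ω) − φ(v)/φ(ω) ) : φ, φ' ∈ Λ } for v ∈ E. Then: (i) N(v) ≥ 0 for all v; (ii) N(r·v) = |r|·N(v) for all r ∈ ℝ and v ∈ E (in particular N(−v) = N(v)); (iii) N(v + w) ≤ N(v) + N(w) for all v, w. Moreover, if Λ separates every pair of points — i.e. for all nonzero x, y ∈ E with φ(x) ≠ 0 and φ(y) ≠ 0 for every φ ∈ Λ and with y not a complex scalar multiple of x, there exist φ, φ' ∈ Λ such that |φ(x)·φ'(y)| ≠ |φ(y)·φ'(x)| — then N(v) > 0 for every v ∈ E that is not a complex scalar multiple of ω. Hence N is a symmetric (real) norm on any complex hyperplane of E transverse to ℂ·ω. -/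
/-!
`N v` is the supremum of the real-linear functionals `v ↦ Re (φ' v / φ' ω - φ v / φ ω)` over
`(φ, φ') ∈ Λ × Λ`. This family is bounded on each `v` by compactness of `Λ` and closed under
negation (swap `φ` and `φ'`), and the supremum of any such family is a seminorm.

For definiteness: if `N v ≤ 0`, then `Re (φ v / φ ω)` is a constant `c` on `Λ`, so `u = v - c ω`
makes every `φ u / φ ω` purely imaginary. Then `|φ (u + ω)| = |φ (u - ω)|` for all `φ ∈ Λ`, and
separation forces `u - ω ∈ ℂ (u + ω)`, that is `u ∈ ℂ ω`.
-/

open Set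

section SupOfLinearFunctionals

variable {V : Type*} [AddCommGroup V] [Module ℝ V] {L : Set (V →ₗ[ℝ] ℝ)}

noncomputable def supEval (L : Set (V →ₗ[ℝ] ℝ)) (v : V) : ℝ :=
  sSup ((fun ℓ => ℓ v) '' L)

theorem le_supEval {v : V} (hbdd : BddAbove ((fun ℓ => ℓ v) '' L)) {ℓ : V →ₗ[ℝ] ℝ} (hℓ : ℓ ∈ L) :
    ℓ v ≤ supEval L v :=
  le_csSup hbdd (mem_image_of_mem _ hℓ)

theorem supEval_le {v : V} {c : ℝ} (hne : L.Nonempty) (h : ∀ ℓ ∈ L, ℓ v ≤ c) :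
    supEval L v ≤ c :=
  csSup_le (hne.image _) (forall_mem_image.2 h)

theorem supEval_nonneg (hne : L.Nonempty) (hneg : ∀ ℓ ∈ L, -ℓ ∈ L) {v : V}
    (hbdd : BddAbove ((fun ℓ => ℓ v) '' L)) : 0 ≤ supEval L v := by
  obtain ⟨ℓ, hℓ⟩ := hne
  have h₁ := le_supEval hbdd hℓ
  have h₂ := le_supEval hbdd (hneg ℓ hℓ)
  rw [LinearMap.neg_apply] at h₂
  linarith

theorem supEval_neg (hneg : ∀ ℓ ∈ L, -ℓ ∈ L) (v : V) : supEval L (-v) = supEval L v := by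
  have hsub (w : V) : (fun ℓ : V →ₗ[ℝ] ℝ => ℓ (-w)) '' L ⊆ (fun ℓ => ℓ w) '' L := by
    rintro _ ⟨ℓ, hℓ, rfl⟩
    exact ⟨-ℓ, hneg ℓ hℓ, by simp⟩
  have hsup := hsub (-v)
  rw [neg_neg] at hsup
  rw [supEval, supEval, (hsub v).antisymm hsup]

theorem supEval_smul_of_nonneg {r : ℝ} (hr : 0 ≤ r) (v : V) :
    supEval L (r • v) = r * supEval L v := by
  rw [supEval, supEval, ← smul_eq_mul, ← Real.sSup_smul_of_nonneg hr, ← image_smul, image_image]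
  simp only [map_smul]

theorem supEval_smul (hneg : ∀ ℓ ∈ L, -ℓ ∈ L) (r : ℝ) (v : V) :
    supEval L (r • v) = |r| * supEval L v := by
  rcases le_or_gt 0 r with hr | hr
  · rw [abs_of_nonneg hr, supEval_smul_of_nonneg hr]
  · rw [abs_of_neg hr, ← supEval_neg hneg v, ← supEval_smul_of_nonneg (neg_nonneg.2 hr.le),
      neg_smul_neg]

theorem supEval_add_le (hne : L.Nonempty) {v w : V} (hv : BddAbove ((fun ℓ => ℓ v) '' L))
    (hw : BddAbove ((fun ℓ => ℓ w) '' L)) : supEval L (v + w) ≤ supEval L v + supEval L w :=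
  supEval_le hne fun ℓ hℓ => by
    rw [map_add]
    exact add_le_add (le_supEval hv hℓ) (le_supEval hw hℓ)

end SupOfLinearFunctionals

theorem Complex.add_one_ne_zero_of_re_eq_zero {z : ℂ} (hz : z.re = 0) : z + 1 ≠ 0 := fun h => by
  simpa [hz] using congrArg Complex.re h

theorem Complex.norm_add_one_eq_norm_sub_one_of_re_eq_zero {z : ℂ} (hz : z.re = 0) :
    ‖z + 1‖ = ‖z - 1‖ := by
  have : z - 1 = -(starRingEnd ℂ) (z + 1) := by
    apply Complex.ext <;> simp [hz]
  rw [this, norm_neg, Complex.norm_conj]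

theorem exists_eq_smul_of_sub_eq_smul_add {K V : Type*} [Field K] [NeZero (2 : K)]
    [AddCommGroup V] [Module K V] {u ω : V} (hω : ω ≠ 0) {c : K} (h : u - ω = c • (u + ω)) :
    ∃ d : K, u = d • ω := by
  have key : (1 - c) • u = (1 + c) • ω := by linear_combination (norm := module) h
  have hc : 1 - c ≠ 0 := by
    rintro hc
    rw [hc, zero_smul, ← sub_eq_zero.1 hc, one_add_one_eq_two, eq_comm, smul_eq_zero] at key
    exact key.elim two_ne_zero hω
  exact ⟨(1 - c)⁻¹ * (1 + c), by rw [mul_smul, ← key, inv_smul_smul₀ hc]⟩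

section Finsler

variable {E : Type*} [NormedAddCommGroup E] [NormedSpace ℂ E]

noncomputable def finslerFunctional (ω : E) (φ φ' : E →L[ℂ] ℂ) : E →ₗ[ℝ] ℝ :=
  Complex.reLm ∘ₗ (((φ' ω)⁻¹ • φ' - (φ ω)⁻¹ • φ : E →L[ℂ] ℂ) : E →ₗ[ℂ] ℂ).restrictScalars ℝ

@[simp]
theorem finslerFunctional_apply (ω : E) (φ φ' : E →L[ℂ] ℂ) (v : E) :
    finslerFunctional ω φ φ' v = (φ' v / φ' ω - φ v / φ ω).re := by
  simp [finslerFunctional, div_eq_inv_mul]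

theorem finslerFunctional_swap (ω : E) (φ φ' : E →L[ℂ] ℂ) :
    finslerFunctional ω φ' φ = -finslerFunctional ω φ φ' := by
  ext v
  simp

theorem neg_mem_image2_finslerFunctional {ω : E} {Λ : Set (E →L[ℂ] ℂ)} {ℓ : E →ₗ[ℝ] ℝ}
    (hℓ : ℓ ∈ image2 (finslerFunctional ω) Λ Λ) : -ℓ ∈ image2 (finslerFunctional ω) Λ Λ := by
  obtain ⟨φ, hφ, φ', hφ', rfl⟩ := hℓ
  exact ⟨φ', hφ', φ, hφ, finslerFunctional_swap ω φ φ'⟩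

theorem bddAbove_eval_image2_finslerFunctional {ω : E} {Λ : Set (E →L[ℂ] ℂ)} (hΛ : IsCompact Λ)
    (hω : ∀ φ ∈ Λ, φ ω ≠ 0) (v : E) :
    BddAbove ((fun ℓ => ℓ v) '' image2 (finslerFunctional ω) Λ Λ) := by
  rw [image_image2, ← image_prod]
  refine ((hΛ.prod hΛ).image_of_continuousOn ?_).bddAbove
  simp only [finslerFunctional_apply]
  have h₁ : ∀ p ∈ Λ ×ˢ Λ, p.1 ω ≠ 0 := fun p hp => hω _ hp.1
  have h₂ : ∀ p ∈ Λ ×ˢ Λ, p.2 ω ≠ 0 := fun p hp => hω _ hp.2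
  fun_prop (disch := assumption)

end Finsler

section Separation

variable {E : Type*} [NormedAddCommGroup E] [NormedSpace ℂ E]

/-- `d_Λ (x, y) > 0` whenever `x` and `y` span different complex lines. -/
def SeparatesLines (Λ : Set (E →L[ℂ] ℂ)) : Prop :=
  ∀ x y : E, x ≠ 0 → y ≠ 0 → (∀ φ ∈ Λ, φ x ≠ 0) → (∀ φ ∈ Λ, φ y ≠ 0) →
    (¬ ∃ c : ℂ, y = c • x) → ∃ φ ∈ Λ, ∃ φ' ∈ Λ, ‖φ x * φ' y‖ ≠ ‖φ y * φ' x‖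

variable {ω u : E} {φ : E →L[ℂ] ℂ}

theorem apply_add_ne_zero_of_re_div_eq_zero (hφ : φ ω ≠ 0) (hu : (φ u / φ ω).re = 0) :
    φ (u + ω) ≠ 0 := fun h =>
  Complex.add_one_ne_zero_of_re_eq_zero hu (by rw [div_add_one hφ, ← map_add, h, zero_div])

theorem norm_apply_add_eq_norm_apply_sub (hφ : φ ω ≠ 0) (hu : (φ u / φ ω).re = 0) :
    ‖φ (u + ω)‖ = ‖φ (u - ω)‖ := by
  refine (div_left_inj' (norm_ne_zero_iff.2 hφ)).1 ?_
  rw [← norm_div, ← norm_div, map_add, map_sub, add_div, sub_div, div_self hφ]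
  exact Complex.norm_add_one_eq_norm_sub_one_of_re_eq_zero hu

theorem SeparatesLines.exists_eq_smul {Λ : Set (E →L[ℂ] ℂ)} (hΛ : SeparatesLines Λ) (hω : ω ≠ 0)
    (hΛω : ∀ φ ∈ Λ, φ ω ≠ 0) (hu : ∀ φ ∈ Λ, (φ u / φ ω).re = 0) : ∃ d : ℂ, u = d • ω := by
  by_contra hne
  have hx : u + ω ≠ 0 := fun h => hne ⟨-1, by rw [neg_one_smul, eq_neg_of_add_eq_zero_left h]⟩
  have hy : u - ω ≠ 0 := fun h => hne ⟨1, by rw [one_smul, sub_eq_zero.1 h]⟩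
  have hφx (φ) (hφ : φ ∈ Λ) : φ (u + ω) ≠ 0 :=
    apply_add_ne_zero_of_re_div_eq_zero (hΛω φ hφ) (hu φ hφ)
  have hnorm (φ) (hφ : φ ∈ Λ) : ‖φ (u + ω)‖ = ‖φ (u - ω)‖ :=
    norm_apply_add_eq_norm_apply_sub (hΛω φ hφ) (hu φ hφ)
  have hφy (φ) (hφ : φ ∈ Λ) : φ (u - ω) ≠ 0 := by
    rw [← norm_ne_zero_iff, ← hnorm φ hφ, norm_ne_zero_iff]
    exact hφx φ hφ
  obtain ⟨φ, hφ, φ', hφ', hsep⟩ := hΛ _ _ hx hy hφx hφy fun ⟨c, hc⟩ =>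
    hne (exists_eq_smul_of_sub_eq_smul_add hω hc)
  rw [norm_mul, norm_mul, hnorm φ hφ, hnorm φ' hφ'] at hsep
  exact hsep rfl

theorem SeparatesLines.supEval_image2_finslerFunctional_pos {Λ : Set (E →L[ℂ] ℂ)}
    (hΛ : SeparatesLines Λ) (hΛc : IsCompact Λ) (hΛne : Λ.Nonempty) (hω : ω ≠ 0)
    (hΛω : ∀ φ ∈ Λ, φ ω ≠ 0) {v : E}
    (hv : ¬∃ c : ℂ, v = c • ω) : 0 < supEval (image2 (finslerFunctional ω) Λ Λ) v := by
  obtain ⟨φ₀, hφ₀⟩ := hΛne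
  by_contra! hle
  have hre (φ) (hφ : φ ∈ Λ) : (φ v / φ ω).re = (φ₀ v / φ₀ ω).re := by
    have hnonpos (φ) (hφ : φ ∈ Λ) (φ') (hφ' : φ' ∈ Λ) : finslerFunctional ω φ φ' v ≤ 0 :=
      (le_supEval (bddAbove_eval_image2_finslerFunctional hΛc hΛω v)
        (mem_image2_of_mem hφ hφ')).trans hle
    have h₁ := hnonpos φ₀ hφ₀ φ hφ
    have h₂ := hnonpos φ hφ φ₀ hφ₀
    simp only [finslerFunctional_apply, Complex.sub_re] at h₁ h₂
    linarith
  set c := (φ₀ v / φ₀ ω).re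
  obtain ⟨d, hd⟩ := hΛ.exists_eq_smul (u := v - (c : ℂ) • ω) hω hΛω fun φ hφ => by
    rw [map_sub, map_smul, sub_div, smul_eq_mul, mul_div_cancel_right₀ _ (hΛω φ hφ),
      Complex.sub_re, hre φ hφ, Complex.ofReal_re, sub_self]
  exact hv ⟨d + c, by rw [add_smul, ← hd, sub_add_cancel]⟩

end Separation

theorem finsler_norm_properties_general
    {E : Type*} [NormedAddCommGroup E] [NormedSpace ℂ E]
    (Λ : Set (E →L[ℂ] ℂ)) (hΛc : IsCompact Λ) (hΛne : Λ.Nonempty)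
    (ω : E) (hω : ω ≠ 0) (h1 : ∀ φ ∈ Λ, φ ω ≠ 0)
    (N : E → ℝ)
    (hN : ∀ v : E, N v = sSup {r : ℝ | ∃ φ ∈ Λ, ∃ φ' ∈ Λ,
      r = (φ' v / φ' ω - φ v / φ ω).re}) :
    (∀ v : E, 0 ≤ N v) ∧
    (∀ (r : ℝ) (v : E), N ((r : ℂ) • v) = |r| * N v) ∧
    (∀ v w : E, N (v + w) ≤ N v + N w) ∧
    ((∀ x y : E, x ≠ 0 → y ≠ 0 → (∀ φ ∈ Λ, φ x ≠ 0) → (∀ φ ∈ Λ, φ y ≠ 0) →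
        (¬ ∃ c : ℂ, y = c • x) →
        ∃ φ ∈ Λ, ∃ φ' ∈ Λ,
          ‖φ x * φ' y‖ ≠ ‖φ y * φ' x‖) →
      ∀ v : E, (¬ ∃ c : ℂ, v = c • ω) → 0 < N v) := by
  have hN' : N = supEval (image2 (finslerFunctional ω) Λ Λ) := by
    ext v
    rw [hN, supEval, image_image2]
    simp only [finslerFunctional_apply, image2, eq_comm]
  have hneg (ℓ) (hℓ : ℓ ∈ image2 (finslerFunctional ω) Λ Λ) := neg_mem_image2_finslerFunctional hℓ
  have hbdd := bddAbove_eval_image2_finslerFunctional hΛc h1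
  have hne : (image2 (finslerFunctional ω) Λ Λ).Nonempty := hΛne.image2 hΛne
  subst hN'
  refine ⟨fun v => supEval_nonneg hne hneg (hbdd v), fun r v => ?_,
    fun v w => supEval_add_le hne (hbdd v) (hbdd w),
    fun hΛ v hv => SeparatesLines.supEval_image2_finslerFunctional_pos hΛ hΛc hΛne hω h1 hv⟩
  rw [Complex.coe_smul]
  exact supEval_smul hneg r v

theorem finsler_norm_properties
    {E : Type*} [NormedAddCommGroup E] [NormedSpace ℂ E] [Nontrivial E]
    [FiniteDimensional ℂ E]
    (Λ : Set (E →L[ℂ] ℂ)) (hΛc : IsCompact Λ) (hΛne : Λ.Nonempty)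
    (ω : E) (hω : ω ≠ 0) (h1 : ∀ φ ∈ Λ, φ ω ≠ 0)
    (N : E → ℝ)
    (hN : ∀ v : E, N v = sSup {r : ℝ | ∃ φ ∈ Λ, ∃ φ' ∈ Λ,
      r = (φ' v / φ' ω - φ v / φ ω).re}) :
    (∀ v : E, 0 ≤ N v) ∧
    (∀ (r : ℝ) (v : E), N ((r : ℂ) • v) = |r| * N v) ∧
    (∀ v w : E, N (v + w) ≤ N v + N w) ∧
    ((∀ x y : E, x ≠ 0 → y ≠ 0 → (∀ φ ∈ Λ, φ x ≠ 0) → (∀ φ ∈ Λ, φ y ≠ 0) →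
        (¬ ∃ c : ℂ, y = c • x) →
        ∃ φ ∈ Λ, ∃ φ' ∈ Λ,
          ‖φ x * φ' y‖ ≠ ‖φ y * φ' x‖) →
      ∀ v : E, (¬ ∃ c : ℂ, v = c • ω) → 0 < N v) :=
  finsler_norm_properties_general Λ hΛc hΛne ω hω h1 N hN
end

section
/- Let E be a real normed vector space and Ψ a nonempty compact set (in the operator norm) of continuous linear functionals E → ℝ. Define f(v) = sSup { ψ(v) : ψ ∈ Ψ }. Let u, v ∈ E and suppose there is no ψ ∈ Ψ with both ψ(u) = f(u) and ψ(v) = f(v), i.e. the maxima defining f(u) and f(v) are never attained by the same functional. Then f((u + v)/2) < (f(u) + f(v))/2. -/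
section SSupEval

variable {E : Type*} [SeminormedAddCommGroup E] [NormedSpace ℝ E] {Ψ : Set (E →L[ℝ] ℝ)}

noncomputable def sSupEval (Ψ : Set (E →L[ℝ] ℝ)) (w : E) : ℝ :=
  sSup ((fun ψ : E →L[ℝ] ℝ => ψ w) '' Ψ)

theorem IsCompact.image_apply (hΨ : IsCompact Ψ) (w : E) :
    IsCompact ((fun ψ : E →L[ℝ] ℝ => ψ w) '' Ψ) :=
  hΨ.image (ContinuousLinearMap.apply ℝ ℝ w).continuous

theorem apply_le_sSupEval (hΨ : IsCompact Ψ) {ψ : E →L[ℝ] ℝ} (hψ : ψ ∈ Ψ) (w : E) :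
    ψ w ≤ sSupEval Ψ w :=
  le_csSup (hΨ.image_apply w).bddAbove ⟨ψ, hψ, rfl⟩

theorem exists_apply_eq_sSupEval (hne : Ψ.Nonempty) (hΨ : IsCompact Ψ) (w : E) :
    ∃ ψ ∈ Ψ, ψ w = sSupEval Ψ w :=
  (hΨ.image_apply w).sSup_mem (hne.image _)

/-- A functional realizing the maximum at `a • u + b • v` cannot realize both maxima at `u` and
at `v`, so it loses strictly against one of them. -/
theorem sSupEval_add_smul_lt (hne : Ψ.Nonempty) (hΨ : IsCompact Ψ) {u v : E}
    (h : ¬ ∃ ψ ∈ Ψ, ψ u = sSupEval Ψ u ∧ ψ v = sSupEval Ψ v) {a b : ℝ} (ha : 0 < a) (hb : 0 < b) :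
    sSupEval Ψ (a • u + b • v) < a * sSupEval Ψ u + b * sSupEval Ψ v := by
  obtain ⟨ψ, hψ, hmax⟩ := exists_apply_eq_sSupEval hne hΨ (a • u + b • v)
  have hu := apply_le_sSupEval hΨ hψ u
  have hv := apply_le_sSupEval hΨ hψ v
  have hlt : a * ψ u + b * ψ v < a * sSupEval Ψ u + b * sSupEval Ψ v := by
    rcases hu.lt_or_eq with hu | hu
    · exact add_lt_add_of_lt_of_le (mul_lt_mul_of_pos_left hu ha)
        (mul_le_mul_of_nonneg_left hv hb.le)
    rcases hv.lt_or_eq with hv | hv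
    · exact add_lt_add_of_le_of_lt (mul_le_mul_of_nonneg_left hu.le ha.le)
        (mul_lt_mul_of_pos_left hv hb)
    exact absurd ⟨ψ, hψ, hu, hv⟩ h
  rwa [← hmax, map_add, map_smul, map_smul, smul_eq_mul, smul_eq_mul]

end SSupEval

theorem strict_convexity_criterion
    {E : Type*} [NormedAddCommGroup E] [NormedSpace ℝ E]
    (Ψ : Set (E →L[ℝ] ℝ)) (hΨne : Ψ.Nonempty) (hΨc : IsCompact Ψ)
    (f : E → ℝ) (hf : ∀ v : E, f v = sSup {r : ℝ | ∃ ψ ∈ Ψ, r = ψ v})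
    (u v : E)
    (h : ¬ ∃ ψ ∈ Ψ, ψ u = f u ∧ ψ v = f v) :
    f (((1 : ℝ) / 2) • (u + v)) < (f u + f v) / 2 := by
  obtain rfl : f = sSupEval Ψ := funext fun w => by
    rw [hf, sSupEval]
    congr 1
    ext r
    simp [eq_comm]
  rw [smul_add]
  linarith [sSupEval_add_smul_lt hΨne hΨc h one_half_pos one_half_pos]
end

section
/- Let n ≥ 1 and p : Fin n → ℂ with p 0 = 0 and p j ≠ 0 for all j ≠ 0, and suppose the set { p j : j } is not contained in any circle of ℂ nor in any real-affine line of ℂ. For m ∈ ℂ with m ≠ p j for all j, and v ∈ ℂ, define N(m, v) = (max over j of Re( v / (m − p j) )) − (min over j of Re( v / (m − p j) )), and define H(m, v) = Real.sqrt( (Re(v · conj m))² / |m|⁴ + (Im(v · conj m))² / |m|² ). Then there exist C ≥ 1 and r₀ > 0 such that for all m ∈ ℂ with 0 < |m| < r₀ and all v ∈ ℂ: H(m, v) / C ≤ N(m, v) ≤ C · H(m, v). -/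
/-!
Write `v / m = A + i B`, so that the cusp norm is `√(A² + |m|² B²) ≍ |A| + |m| |B|`.
The puncture `p₀ = 0` contributes `Re (v / m) = A` to the Hilbert norm `N`, while for `j ≠ 0`
the term `Re (v / (m - p j))` is `O(|v|)` and equals `-Re (v / p j)` up to `O(|v| |m|)`.
Hence `N ≲ |A| + |v| ≲ H`.

Conversely, inversion maps the lines and circles through `0` onto lines, so the points `1 / p j`
(`j ≠ 0`) are not collinear: two differences `e₁ = 1 / p k - 1 / p j`, `e₂ = 1 / p l - 1 / p j`
are `ℝ`-linearly independent, and `v ↦ (Re (v e₁), Re (v e₂))` is injective. Comparing with the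
terms of `N` gives `|v| ≲ N + |v| |m|`, so `|v| ≲ N` for small `m`, and then
`|A| ≤ N + |Re (v / (m - p j))| ≲ N + |v|` gives `H ≲ N`.
-/

open Complex ComplexConjugate

theorem exists_real_mul_conj_of_im_mul_eq_zero {e z : ℂ} (he : e ≠ 0) (h : (e * z).im = 0) :
    ∃ t : ℝ, z = t * conj e := by
  refine ⟨(e * z).re / normSq e, ?_⟩
  have hez : e * z = ((e * z).re : ℂ) := ext rfl (by simpa using h)
  rw [ofReal_div, ← hez, ← mul_conj, div_mul_eq_mul_div,
    eq_div_iff (mul_ne_zero he ((map_ne_zero _).mpr he))]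
  ring

-- `‖z - ctr‖ = ‖ctr‖` amounts to `normSq z = 2 * (z * conj ctr).re`.
theorem norm_sub_eq_norm_of_im_mul_eq {e z : ℂ} {c : ℝ} (hc : c ≠ 0)
    (h : (e * z).im = c * normSq z) :
    ‖z - I * conj e / (2 * c)‖ = ‖I * conj e / (2 * c)‖ := by
  have hre : (z * conj (I * conj e / (2 * c))).re = normSq z / 2 := by
    have : z * conj (I * conj e / (2 * c)) = -I * (e * z) / (2 * c) := by
      simp only [map_div₀, map_mul, conj_I, conj_conj, map_ofNat, conj_ofReal]; ring
    rw [this, show (2 * (c : ℂ)) = ((2 * c : ℝ) : ℂ) by push_cast; ring, div_ofReal_re]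
    simp only [neg_mul, neg_re, mul_re, I_re, I_im, zero_mul, one_mul, zero_sub, neg_neg, h]
    field_simp
  rw [norm_def, norm_def, normSq_sub, hre]
  ring_nf

theorem im_mul_eq_of_im_inv_mul_conj_eq {e z : ℂ} {c : ℝ} (h : (z⁻¹ * conj e).im = c) :
    (e * z).im = -c * normSq z := by
  rcases eq_or_ne z 0 with rfl | hz
  · simp
  have hn : normSq z ≠ 0 := normSq_eq_zero.not.mpr hz
  rw [inv_def] at h
  rw [← h, mul_comm (conj z), mul_assoc, im_ofReal_mul, ← map_mul, conj_im, mul_comm e]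
  field_simp

theorem exists_im_mul_conj_eq_of_forall_im_sub_mul_conj_sub_eq_zero {ι : Type*} {s : Set ι}
    (w : ι → ℂ) (h : ∀ j ∈ s, ∀ k ∈ s, ∀ l ∈ s, ((w k - w j) * conj (w l - w j)).im = 0) :
    ∃ e : ℂ, e ≠ 0 ∧ ∃ c : ℝ, ∀ i ∈ s, (w i * conj e).im = c := by
  by_cases hconst : ∃ j ∈ s, ∃ k ∈ s, w j ≠ w k
  · obtain ⟨j, hj, k, hk, hjk⟩ := hconst
    refine ⟨w k - w j, sub_ne_zero.mpr hjk.symm, (w j * conj (w k - w j)).im, fun i hi => ?_⟩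
    have hi' : ((w i - w j) * conj (w k - w j)).im = 0 := by
      have := h j hj k hk i hi
      simp only [mul_im, conj_re, conj_im] at this ⊢
      linarith
    rw [← sub_eq_zero, ← sub_im, ← sub_mul, hi']
  · push Not at hconst
    rcases s.eq_empty_or_nonempty with rfl | ⟨j, hj⟩
    · exact ⟨1, one_ne_zero, 0, by simp⟩
    · exact ⟨1, one_ne_zero, (w j).im, fun i hi => by simp [hconst i hi j hj]⟩

theorem exists_line_or_circle_of_im_mul_eq {ι : Type*} (p : ι → ℂ) {e : ℂ} (he : e ≠ 0) {c : ℝ}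
    (h : ∀ i, (e * p i).im = c * normSq (p i)) :
    (∃ q d : ℂ, d ≠ 0 ∧ ∀ i, ∃ t : ℝ, p i = q + t * d) ∨
      ∃ (ctr : ℂ) (r : ℝ), 0 < r ∧ ∀ i, ‖p i - ctr‖ = r := by
  rcases eq_or_ne c 0 with rfl | hc
  · refine Or.inl ⟨0, conj e, (map_ne_zero _).mpr he, fun i => ?_⟩
    simpa using exists_real_mul_conj_of_im_mul_eq_zero he (by simpa using h i)
  · refine Or.inr ⟨_, _, ?_, fun i => norm_sub_eq_norm_of_im_mul_eq hc (h i)⟩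
    simp [he, hc]

theorem exists_im_inv_sub_mul_conj_ne_zero {ι : Type*} (p : ι → ℂ) (i₀ : ι) (hp0 : p i₀ = 0)
    (hcircle : ¬ ∃ (c : ℂ) (r : ℝ), 0 < r ∧ ∀ j, ‖p j - c‖ = r)
    (hline : ¬ ∃ (q e : ℂ), e ≠ 0 ∧ ∀ j, ∃ t : ℝ, p j = q + (t : ℂ) * e) :
    ∃ j k l, j ≠ i₀ ∧ k ≠ i₀ ∧ l ≠ i₀ ∧
      (((p k)⁻¹ - (p j)⁻¹) * conj ((p l)⁻¹ - (p j)⁻¹)).im ≠ 0 := by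
  by_contra! hcol
  obtain ⟨e, he, c, hc⟩ := exists_im_mul_conj_eq_of_forall_im_sub_mul_conj_sub_eq_zero
    (s := {i | i ≠ i₀}) (fun i => (p i)⁻¹) fun j hj k hk l hl => hcol j k l hj hk hl
  have hpc : ∀ i, (e * p i).im = -c * normSq (p i) := by
    intro i
    rcases eq_or_ne i i₀ with rfl | hi
    · simp [hp0]
    · exact im_mul_eq_of_im_inv_mul_conj_eq (hc i hi)
  exact (exists_line_or_circle_of_im_mul_eq p he hpc).elim hline hcircle

theorem exists_norm_le_mul_max_abs_re_mul {e₁ e₂ : ℂ} (h : (e₁ * conj e₂).im ≠ 0) :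
    ∃ K : ℝ, 0 < K ∧ ∀ v : ℂ, ‖v‖ ≤ K * max |(v * e₁).re| |(v * e₂).re| := by
  let L : ℂ →ₗ[ℝ] ℝ × ℝ :=
    (reLm ∘ₗ LinearMap.mulRight ℝ e₁).prod (reLm ∘ₗ LinearMap.mulRight ℝ e₂)
  have hker : LinearMap.ker L = ⊥ := by
    refine LinearMap.ker_eq_bot'.mpr fun v hv => ?_
    have h₁ : (v * e₁).re = 0 := by simpa [L] using congrArg Prod.fst hv
    have h₂ : (v * e₂).re = 0 := by simpa [L] using congrArg Prod.snd hv
    have hprod : (v * e₁ * conj (v * e₂)).im = normSq v * (e₁ * conj e₂).im := by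
      rw [map_mul, show v * e₁ * (conj v * conj e₂) = (v * conj v) * (e₁ * conj e₂) by ring,
        mul_conj, im_ofReal_mul]
    have : normSq v * (e₁ * conj e₂).im = 0 := by
      rw [← hprod, mul_im, conj_re, conj_im, h₁, h₂]; ring
    exact normSq_eq_zero.mp ((mul_eq_zero.mp this).resolve_right h)
  obtain ⟨K, hK, hL⟩ := L.exists_antilipschitzWith hker
  refine ⟨K, hK, fun v => ?_⟩
  simpa [L, Prod.norm_def] using hL.le_mul_norm (map_zero L) v

theorem abs_sub_le_sSup_sub_sInf {ι : Type*} [Finite ι] (f : ι → ℝ) (i j : ι) :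
    |f i - f j| ≤ sSup (Set.range f) - sInf (Set.range f) := by
  have hsup : ∀ i, f i ≤ sSup (Set.range f) := fun i =>
    le_csSup (Set.finite_range f).bddAbove ⟨i, rfl⟩
  have hinf : ∀ i, sInf (Set.range f) ≤ f i := fun i =>
    csInf_le (Set.finite_range f).bddBelow ⟨i, rfl⟩
  rw [abs_sub_le_iff]
  constructor <;> linarith [hsup i, hsup j, hinf i, hinf j]

theorem sSup_sub_sInf_le_two_mul {ι : Type*} [Nonempty ι] {f : ι → ℝ} {M : ℝ}
    (h : ∀ i, |f i| ≤ M) : sSup (Set.range f) - sInf (Set.range f) ≤ 2 * M := by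
  have hsup : sSup (Set.range f) ≤ M :=
    csSup_le (Set.range_nonempty f) (Set.forall_mem_range.mpr fun i => (le_abs_self _).trans (h i))
  have hinf : -M ≤ sInf (Set.range f) :=
    le_csInf (Set.range_nonempty f)
      (Set.forall_mem_range.mpr fun i => neg_le.mp ((neg_le_abs _).trans (h i)))
  linarith

noncomputable def hilbertNorm {ι : Type*} (p : ι → ℂ) (m v : ℂ) : ℝ :=
  sSup (Set.range fun j => (v / (m - p j)).re) - sInf (Set.range fun j => (v / (m - p j)).re)

noncomputable def cuspNorm (m v : ℂ) : ℝ :=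
  √((v * conj m).re ^ 2 / ‖m‖ ^ 4 + (v * conj m).im ^ 2 / ‖m‖ ^ 2)

section CuspNorm

variable {m : ℂ} (v : ℂ)

theorem cuspNorm_eq (hm : m ≠ 0) :
    cuspNorm m v = √((v / m).re ^ 2 + ‖m‖ ^ 2 * (v / m).im ^ 2) := by
  have hvm : v * conj m = v / m * (‖m‖ ^ 2 : ℝ) := by
    rw [← normSq_eq_norm_sq, ← mul_conj]; field_simp
  rw [cuspNorm, hvm, re_mul_ofReal, im_mul_ofReal]
  congr 1
  field_simp

theorem abs_re_div_le_cuspNorm (hm : m ≠ 0) : |(v / m).re| ≤ cuspNorm m v := by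
  rw [cuspNorm_eq v hm, ← Real.sqrt_sq_eq_abs]
  exact Real.sqrt_le_sqrt (le_add_of_nonneg_right (by positivity))

theorem norm_mul_abs_im_div_le_cuspNorm (hm : m ≠ 0) : ‖m‖ * |(v / m).im| ≤ cuspNorm m v := by
  rw [cuspNorm_eq v hm, ← abs_norm m, ← abs_mul, ← Real.sqrt_sq_eq_abs, mul_pow, sq_abs]
  exact Real.sqrt_le_sqrt (le_add_of_nonneg_left (sq_nonneg _))

theorem norm_mul_abs_im_div_le_norm (hm : m ≠ 0) : ‖m‖ * |(v / m).im| ≤ ‖v‖ := by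
  calc ‖m‖ * |(v / m).im| ≤ ‖m‖ * ‖v / m‖ := by gcongr; exact abs_im_le_norm _
    _ = ‖v‖ := by rw [norm_div, mul_div_cancel₀ _ (norm_ne_zero_iff.mpr hm)]

theorem cuspNorm_le (hm : m ≠ 0) : cuspNorm m v ≤ |(v / m).re| + ‖v‖ := by
  have him := norm_mul_abs_im_div_le_norm v hm
  rw [cuspNorm_eq v hm, Real.sqrt_le_left (by positivity)]
  nlinarith [abs_nonneg (v / m).re, sq_abs (v / m).re, sq_abs (v / m).im, norm_nonneg v,
    mul_nonneg (norm_nonneg m) (abs_nonneg (v / m).im)]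

theorem norm_le_two_mul_cuspNorm (hm : m ≠ 0) (hm1 : ‖m‖ ≤ 1) : ‖v‖ ≤ 2 * cuspNorm m v := by
  have hv : ‖v‖ ≤ ‖m‖ * |(v / m).re| + ‖m‖ * |(v / m).im| := by
    calc ‖v‖ = ‖m‖ * ‖v / m‖ := by rw [norm_div, mul_div_cancel₀ _ (norm_ne_zero_iff.mpr hm)]
      _ ≤ ‖m‖ * (|(v / m).re| + |(v / m).im|) := by gcongr; exact norm_le_abs_re_add_abs_im _
      _ = _ := mul_add _ _ _
  have hre : ‖m‖ * |(v / m).re| ≤ |(v / m).re| := mul_le_of_le_one_left (abs_nonneg _) hm1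
  linarith [abs_re_div_le_cuspNorm v hm, norm_mul_abs_im_div_le_cuspNorm v hm]

end CuspNorm

section Pole

variable {δ : ℝ} {m p : ℂ} (v : ℂ)

theorem half_le_norm_sub (hp : δ ≤ ‖p‖) (hm : ‖m‖ ≤ δ / 2) : δ / 2 ≤ ‖m - p‖ := by
  linarith [norm_sub_norm_le p m, norm_sub_rev m p]

theorem norm_div_sub_le (hδ : 0 < δ) (hp : δ ≤ ‖p‖) (hm : ‖m‖ ≤ δ / 2) :
    ‖v / (m - p)‖ ≤ 2 * ‖v‖ / δ := by
  rw [norm_div, div_le_div_iff₀ (by linarith [half_le_norm_sub hp hm]) hδ]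
  nlinarith [half_le_norm_sub hp hm, norm_nonneg v]

theorem norm_div_sub_add_div_le (hδ : 0 < δ) (hp : δ ≤ ‖p‖) (hm : ‖m‖ ≤ δ / 2) :
    ‖v / (m - p) + v / p‖ ≤ 2 * ‖v‖ * ‖m‖ / δ ^ 2 := by
  have hmp := half_le_norm_sub hp hm
  have hp0 : p ≠ 0 := norm_pos_iff.mp (hδ.trans_le hp)
  have hmp0 : m - p ≠ 0 := norm_pos_iff.mp (by linarith)
  have : v / (m - p) + v / p = v * m / ((m - p) * p) := by field_simp; ring
  rw [this, norm_div, norm_mul, norm_mul, div_le_div_iff₀ (by positivity) (by positivity)]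
  have : δ ^ 2 ≤ 2 * (‖m - p‖ * ‖p‖) := by nlinarith
  nlinarith [mul_nonneg (norm_nonneg v) (norm_nonneg m)]

end Pole

theorem exists_pos_forall_ne_le_norm {ι : Type*} [Finite ι] {p : ι → ℂ} {i₀ : ι}
    (hp : ∀ i, i ≠ i₀ → p i ≠ 0) : ∃ δ : ℝ, 0 < δ ∧ ∀ i, i ≠ i₀ → δ ≤ ‖p i‖ := by
  have : Nonempty ι := ⟨i₀⟩
  classical
  let g : ι → ℝ := fun i => if i = i₀ then 1 else ‖p i‖
  obtain ⟨i, hi⟩ := Finite.exists_min g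
  refine ⟨g i, ?_, fun j hj => by simpa [g, hj] using hi j⟩
  by_cases h : i = i₀ <;> simp [g, h, hp]

section NearPuncture

variable {ι : Type*} {p : ι → ℂ} {i₀ : ι} {δ : ℝ} {m : ℂ} (v : ℂ)

theorem abs_re_div_sub_sub_le_hilbertNorm [Finite ι] (i j : ι) :
    |(v / (m - p i)).re - (v / (m - p j)).re| ≤ hilbertNorm p m v :=
  abs_sub_le_sSup_sub_sInf (fun j => (v / (m - p j)).re) i j

theorem hilbertNorm_nonneg [Finite ι] (i : ι) : 0 ≤ hilbertNorm p m v := by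
  simpa using abs_re_div_sub_sub_le_hilbertNorm (p := p) (m := m) v i i

theorem hilbertNorm_le_mul_cuspNorm (hp0 : p i₀ = 0) (hδ : 0 < δ)
    (hδp : ∀ i, i ≠ i₀ → δ ≤ ‖p i‖) (hm0 : m ≠ 0) (hm : ‖m‖ ≤ δ / 2) (hm1 : ‖m‖ ≤ 1) :
    hilbertNorm p m v ≤ (2 + 8 / δ) * cuspNorm m v := by
  have : Nonempty ι := ⟨i₀⟩
  have hbound : ∀ i, |(v / (m - p i)).re| ≤ |(v / m).re| + 2 * ‖v‖ / δ := by
    intro i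
    have : 0 ≤ 2 * ‖v‖ / δ := by positivity
    rcases eq_or_ne i i₀ with rfl | hi
    · rw [hp0, sub_zero]; linarith
    · linarith [abs_nonneg (v / m).re, abs_re_le_norm (v / (m - p i)),
        norm_div_sub_le v hδ (hδp i hi) hm]
  have hA := abs_re_div_le_cuspNorm v hm0
  have hv : 4 * ‖v‖ / δ ≤ 8 * cuspNorm m v / δ := by
    have := norm_le_two_mul_cuspNorm v hm0 hm1
    exact div_le_div_of_nonneg_right (by linarith) hδ.le
  calc hilbertNorm p m v ≤ 2 * (|(v / m).re| + 2 * ‖v‖ / δ) := sSup_sub_sInf_le_two_mul hbound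
    _ = 2 * |(v / m).re| + 4 * ‖v‖ / δ := by ring
    _ ≤ 2 * cuspNorm m v + 8 * cuspNorm m v / δ := by gcongr
    _ = (2 + 8 / δ) * cuspNorm m v := by ring

theorem abs_re_mul_inv_sub_inv_le [Finite ι] (hδ : 0 < δ) (hm : ‖m‖ ≤ δ / 2) {j k : ι}
    (hj : δ ≤ ‖p j‖) (hk : δ ≤ ‖p k‖) :
    |(v * ((p k)⁻¹ - (p j)⁻¹)).re| ≤ hilbertNorm p m v + 4 * ‖v‖ * ‖m‖ / δ ^ 2 := by
  have hsplit : v * ((p k)⁻¹ - (p j)⁻¹) = (v / (m - p k) + v / p k) - (v / (m - p j) + v / p j)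
      - (v / (m - p k) - v / (m - p j)) := by ring
  rw [hsplit, sub_re, sub_re, sub_re]
  have hk' := (abs_re_le_norm _).trans (norm_div_sub_add_div_le v hδ hk hm)
  have hj' := (abs_re_le_norm _).trans (norm_div_sub_add_div_le v hδ hj hm)
  have hN := abs_re_div_sub_sub_le_hilbertNorm (p := p) (m := m) v k j
  have := abs_sub (((v / (m - p k) + v / p k)).re - (v / (m - p j) + v / p j).re)
    ((v / (m - p k)).re - (v / (m - p j)).re)
  have := abs_sub (v / (m - p k) + v / p k).re (v / (m - p j) + v / p j).re
  have : 4 * ‖v‖ * ‖m‖ / δ ^ 2 = 2 * ‖v‖ * ‖m‖ / δ ^ 2 + 2 * ‖v‖ * ‖m‖ / δ ^ 2 := by ring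
  linarith

theorem norm_le_two_mul_hilbertNorm [Finite ι] (hδ : 0 < δ) (hm : ‖m‖ ≤ δ / 2) {j k l : ι}
    (hj : δ ≤ ‖p j‖) (hk : δ ≤ ‖p k‖) (hl : δ ≤ ‖p l‖) {K : ℝ} (hK : 0 < K)
    (hKv : ∀ u : ℂ, ‖u‖ ≤ K * max |(u * ((p k)⁻¹ - (p j)⁻¹)).re| |(u * ((p l)⁻¹ - (p j)⁻¹)).re|)
    (hmK : ‖m‖ ≤ δ ^ 2 / (8 * K)) :
    ‖v‖ ≤ 2 * K * hilbertNorm p m v := by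
  have hmax := max_le (abs_re_mul_inv_sub_inv_le v hδ hm hj hk)
    (abs_re_mul_inv_sub_inv_le v hδ hm hj hl)
  have hsmall : K * (4 * ‖v‖ * ‖m‖ / δ ^ 2) ≤ ‖v‖ / 2 := by
    calc K * (4 * ‖v‖ * ‖m‖ / δ ^ 2) ≤ K * (4 * ‖v‖ * (δ ^ 2 / (8 * K)) / δ ^ 2) := by gcongr
      _ = ‖v‖ / 2 := by field_simp; ring
  nlinarith [hKv v]

theorem cuspNorm_le_hilbertNorm_add [Finite ι] (hp0 : p i₀ = 0) (hδ : 0 < δ) (hm0 : m ≠ 0)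
    (hm : ‖m‖ ≤ δ / 2) {j : ι} (hj : δ ≤ ‖p j‖) :
    cuspNorm m v ≤ hilbertNorm p m v + (1 + 2 / δ) * ‖v‖ := by
  have hN := abs_re_div_sub_sub_le_hilbertNorm (p := p) (m := m) v i₀ j
  rw [hp0, sub_zero] at hN
  have hj' := (abs_re_le_norm _).trans (norm_div_sub_le v hδ hj hm)
  have := abs_sub_abs_le_abs_sub (v / m).re (v / (m - p j)).re
  have : (1 + 2 / δ) * ‖v‖ = ‖v‖ + 2 * ‖v‖ / δ := by ring
  linarith [cuspNorm_le v hm0]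

end NearPuncture

theorem finsler_vs_hyperbolic_near_cusp
    (n : ℕ) (hn : 0 < n) (p : Fin n → ℂ)
    (hp0 : p ⟨0, hn⟩ = 0)
    (hpj : ∀ j : Fin n, j ≠ ⟨0, hn⟩ → p j ≠ 0)
    (hcircle : ¬ ∃ (c : ℂ) (r : ℝ), 0 < r ∧ ∀ j : Fin n, ‖p j - c‖ = r)
    (hline : ¬ ∃ (q e : ℂ), e ≠ 0 ∧ ∀ j : Fin n, ∃ t : ℝ, p j = q + (t : ℂ) * e) :
    ∃ C : ℝ, 1 ≤ C ∧ ∃ r₀ : ℝ, 0 < r₀ ∧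
      ∀ m : ℂ, 0 < ‖m‖ → ‖m‖ < r₀ → ∀ v : ℂ,
        (Real.sqrt (((v * (starRingEnd ℂ) m).re) ^ 2 / (‖m‖) ^ 4 +
            ((v * (starRingEnd ℂ) m).im) ^ 2 / (‖m‖) ^ 2)) / C ≤
          sSup (Set.range fun j : Fin n => (v / (m - p j)).re) -
            sInf (Set.range fun j : Fin n => (v / (m - p j)).re) ∧
        sSup (Set.range fun j : Fin n => (v / (m - p j)).re) -
            sInf (Set.range fun j : Fin n => (v / (m - p j)).re) ≤
          C * Real.sqrt (((v * (starRingEnd ℂ) m).re) ^ 2 / (‖m‖) ^ 4 +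
            ((v * (starRingEnd ℂ) m).im) ^ 2 / (‖m‖) ^ 2) := by
  obtain ⟨j, k, l, hj, hk, hl, hD⟩ := exists_im_inv_sub_mul_conj_ne_zero p _ hp0 hcircle hline
  obtain ⟨K, hK, hKv⟩ := exists_norm_le_mul_max_abs_re_mul hD
  obtain ⟨δ, hδ, hδp⟩ := exists_pos_forall_ne_le_norm hpj
  set C := max (2 + 8 / δ) (1 + 2 * K * (1 + 2 / δ))
  have hC : 1 ≤ C := le_max_of_le_left (by linarith [show 0 < 8 / δ by positivity])
  refine ⟨C, hC, min (min (δ / 2) 1) (δ ^ 2 / (8 * K)), by positivity, fun m hm0 hmr v => ?_⟩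
  have hmδ : ‖m‖ ≤ δ / 2 := hmr.le.trans ((min_le_left _ _).trans (min_le_left _ _))
  have hm1 : ‖m‖ ≤ 1 := hmr.le.trans ((min_le_left _ _).trans (min_le_right _ _))
  have hmK : ‖m‖ ≤ δ ^ 2 / (8 * K) := hmr.le.trans (min_le_right _ _)
  have hm : m ≠ 0 := norm_pos_iff.mp hm0
  have hN := hilbertNorm_nonneg (p := p) (m := m) v j
  have hv := norm_le_two_mul_hilbertNorm v hδ hmδ (hδp j hj) (hδp k hk) (hδp l hl) hK hKv hmK
  change cuspNorm m v / C ≤ hilbertNorm p m v ∧ hilbertNorm p m v ≤ C * cuspNorm m v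
  constructor
  · rw [div_le_iff₀ (by positivity)]
    calc cuspNorm m v ≤ hilbertNorm p m v + (1 + 2 / δ) * ‖v‖ :=
          cuspNorm_le_hilbertNorm_add v hp0 hδ hm hmδ (hδp j hj)
      _ ≤ hilbertNorm p m v + (1 + 2 / δ) * (2 * K * hilbertNorm p m v) := by gcongr
      _ = (1 + 2 * K * (1 + 2 / δ)) * hilbertNorm p m v := by ring
      _ ≤ hilbertNorm p m v * C := by rw [mul_comm]; gcongr; exact le_max_right _ _
  · exact (hilbertNorm_le_mul_cuspNorm v hp0 hδ hδp hm hmδ hm1).trans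
      (mul_le_mul_of_nonneg_right (le_max_left _ _) (Real.sqrt_nonneg _))
end

section
/- Let Λ ⊆ ℝ be a compact set, let α, β ∈ Λ with α < β and Λ ∩ (α, β) = ∅ (so (α, β) is a connected component of the complement of Λ), and let ω, ω' ∈ (α, β) with α < ω < ω' < β. Then sSup { |(λ − ω)·(λ' − ω')| / (|(λ − ω')·(λ' − ω)|) : λ, λ' ∈ Λ } = ((β − ω)·(ω' − α)) / ((β − ω')·(ω − α)). In particular the supremum defining d_Λ(ω, ω') is attained at the endpoints α, β of the component, and d_Λ restricted to the component coincides with the Hilbert metric of the interval (α, β). -/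
/-!
For `ω < ω'` the map `l ↦ |l - ω| / |l - ω'|` is below `1` to the left of `ω` and decreases
from `+∞` to `1` to the right of `ω'`, so on the complement of `(α, β)` it is maximal at `β`;
reflecting `ℝ` gives the same for `l ↦ |l - ω'| / |l - ω|`, maximal at `α`. The cross-ratio
factors as a product of these two maps, hence is maximal at `(l, l') = (β, α)`.
-/

lemma abs_sub_div_abs_sub_le_of_le_or_le {α β ω ω' l : ℝ}
    (h1 : α < ω) (h2 : ω < ω') (h3 : ω' < β) (hl : l ≤ α ∨ β ≤ l) :
    |l - ω| / |l - ω'| ≤ (β - ω) / (β - ω') := by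
  rcases hl with hl | hl
  · rw [abs_of_neg (by linarith), abs_of_neg (by linarith),
      div_le_div_iff₀ (by linarith) (by linarith)]
    nlinarith
  · rw [abs_of_pos (by linarith), abs_of_pos (by linarith),
      div_le_div_iff₀ (by linarith) (by linarith)]
    nlinarith

lemma abs_sub_div_abs_sub_le_of_le_or_le' {α β ω ω' l : ℝ}
    (h1 : α < ω) (h2 : ω < ω') (h3 : ω' < β) (hl : l ≤ α ∨ β ≤ l) :
    |l - ω'| / |l - ω| ≤ (ω' - α) / (ω - α) := by
  have key := abs_sub_div_abs_sub_le_of_le_or_le (α := -β) (β := -α) (ω := -ω') (ω' := -ω)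
    (neg_lt_neg h3) (neg_lt_neg h2) (neg_lt_neg h1) (hl.symm.imp neg_le_neg neg_le_neg)
  simpa only [neg_sub_neg, abs_sub_comm ω', abs_sub_comm ω] using key

theorem sup_crossratio_attained_at_endpoints_general
    (Λ : Set ℝ)
    (α β : ℝ) (hα : α ∈ Λ) (hβ : β ∈ Λ)
    (hgap : Λ ∩ Set.Ioo α β = ∅)
    (ω ω' : ℝ) (h1 : α < ω) (h2 : ω < ω') (h3 : ω' < β) :
    sSup {r : ℝ | ∃ l ∈ Λ, ∃ l' ∈ Λ,
        r = |(l - ω) * (l' - ω')| / |(l - ω') * (l' - ω)|} =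
      ((β - ω) * (ω' - α)) / ((β - ω') * (ω - α)) := by
  have hout : ∀ l ∈ Λ, l ≤ α ∨ β ≤ l := by
    intro l hl
    by_contra! h
    exact hgap.subset ⟨hl, h⟩
  refine IsGreatest.csSup_eq ⟨⟨β, hβ, α, hα, ?_⟩, ?_⟩
  · rw [abs_of_neg (by nlinarith), abs_of_neg (by nlinarith)]
    ring
  · rintro r ⟨l, hl, l', hl', rfl⟩
    rw [abs_mul, abs_mul, ← div_mul_div_comm, ← div_mul_div_comm]
    exact mul_le_mul (abs_sub_div_abs_sub_le_of_le_or_le h1 h2 h3 (hout l hl))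
      (abs_sub_div_abs_sub_le_of_le_or_le' h1 h2 h3 (hout l' hl'))
      (by positivity) (div_nonneg (by linarith) (by linarith))

theorem sup_crossratio_attained_at_endpoints
    (Λ : Set ℝ) (hΛc : IsCompact Λ)
    (α β : ℝ) (hα : α ∈ Λ) (hβ : β ∈ Λ) (hαβ : α < β)
    (hgap : Λ ∩ Set.Ioo α β = ∅)
    (ω ω' : ℝ) (h1 : α < ω) (h2 : ω < ω') (h3 : ω' < β) :
    sSup {r : ℝ | ∃ l ∈ Λ, ∃ l' ∈ Λ,
        r = |(l - ω) * (l' - ω')| / |(l - ω') * (l' - ω)|} =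
      ((β - ω) * (ω' - α)) / ((β - ω') * (ω - α)) :=
  sup_crossratio_attained_at_endpoints_general Λ α β hα hβ hgap ω ω' h1 h2 h3
end

section
/- Let a > 1 and let Λ ⊆ ℝ be a compact set with {−a, −1, 1, a} ⊆ Λ and Λ ⊆ [−a, −1] ∪ [1, a]. For λ ∈ ℝ define the linear form f_λ : ℝ² → ℝ by f_λ(x, y) = x − λ·y, and for nonzero u, u' ∈ ℝ² (with all the forms f_λ, λ ∈ Λ, nonvanishing at u and u') set S(u, u') = sSup { |f_λ(u)·f_{λ'}(u')| / (|f_λ(u')·f_{λ'}(u)|) : λ, λ' ∈ Λ }. Then: (i) for every u = (x, y) with |x| < |y| and every nonzero u' = (x', y') with |x'| > a·|y'|, one has S(u, u') ≥ a; (ii) S((0, 1), (1, 0)) = a. Consequently the distance d_Λ = log S between the two components (−1, 1) and ℝP¹ \ [−a, a] of the complement of Λ equals log a, which is the hyperbolic distance between the geodesics of the upper half-plane with endpoints {−1, 1} and {−a, a}. -/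
/-!
Write `t = x / y ∈ (-1, 1)` and `s = x' / y'` with `|s| > a`. The cross-ratios for the pairs
`(a, 1)` and `(-a, -1)` multiply to `(a² - t²) / (1 - t²) · (s² - 1) / (s² - a²)`, whose first
factor is at least `a²` and whose second is at least `1`; so one of them is at least `a`.
At `u = 0`, `u' = ∞` the cross-ratio of `(l, l')` is `|l| / |l'|`, which is at most `a` on `Λ`
and equals `a` at `(a, 1)`. The suprema are finite because `Λ` is compact and no form `f_λ`,
`λ ∈ Λ`, vanishes at `u` or `u'`.
-/

/-- The supremum of the moduli of cross-ratios for points of `ℝP¹` represented by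
nonzero vectors of `ℝ²`, where `λ ∈ Λ` is identified with the form `(x, y) ↦ x - λ y`. -/
noncomputable def projS (Λ : Set ℝ) (u u' : ℝ × ℝ) : ℝ :=
  sSup {r : ℝ | ∃ l ∈ Λ, ∃ l' ∈ Λ,
    r = |(u.1 - l * u.2) * (u'.1 - l' * u'.2)| /
        |(u'.1 - l * u'.2) * (u.1 - l' * u.2)|}

open Set

noncomputable def absCrossRatio (l l' : ℝ) (u u' : ℝ × ℝ) : ℝ :=
  |(u.1 - l * u.2) * (u'.1 - l' * u'.2)| / |(u'.1 - l * u'.2) * (u.1 - l' * u.2)|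

lemma absCrossRatio_nonneg (l l' : ℝ) (u u' : ℝ × ℝ) : 0 ≤ absCrossRatio l l' u u' := by
  unfold absCrossRatio; positivity

lemma projS_eq_sSup_image (Λ : Set ℝ) (u u' : ℝ × ℝ) :
    projS Λ u u' = sSup ((fun p : ℝ × ℝ => absCrossRatio p.1 p.2 u u') '' Λ ×ˢ Λ) := by
  unfold projS absCrossRatio
  congr 1
  ext r
  simp only [mem_image, mem_prod, Prod.exists]
  constructor
  · rintro ⟨l, hl, l', hl', rfl⟩
    exact ⟨l, l', ⟨hl, hl'⟩, rfl⟩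
  · rintro ⟨l, l', ⟨hl, hl'⟩, rfl⟩
    exact ⟨l, hl, l', hl', rfl⟩

lemma bddAbove_absCrossRatio_image {Λ : Set ℝ} (hΛ : IsCompact Λ) {u u' : ℝ × ℝ}
    (hu : ∀ l ∈ Λ, u.1 - l * u.2 ≠ 0) (hu' : ∀ l ∈ Λ, u'.1 - l * u'.2 ≠ 0) :
    BddAbove ((fun p : ℝ × ℝ => absCrossRatio p.1 p.2 u u') '' Λ ×ˢ Λ) := by
  refine ((hΛ.prod hΛ).image_of_continuousOn ?_).bddAbove
  refine ContinuousOn.div (by fun_prop) (by fun_prop) fun p hp => ?_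
  exact abs_ne_zero.2 (mul_ne_zero (hu' p.1 hp.1) (hu p.2 hp.2))

lemma absCrossRatio_le_projS {Λ : Set ℝ} {u u' : ℝ × ℝ}
    (hbdd : BddAbove ((fun p : ℝ × ℝ => absCrossRatio p.1 p.2 u u') '' Λ ×ˢ Λ))
    {l l' : ℝ} (hl : l ∈ Λ) (hl' : l' ∈ Λ) : absCrossRatio l l' u u' ≤ projS Λ u u' := by
  rw [projS_eq_sSup_image]
  exact le_csSup hbdd ⟨(l, l'), ⟨hl, hl'⟩, rfl⟩

lemma sub_mul_ne_zero_of_abs_mul_ne {x y l : ℝ} (h : |l| * |y| ≠ |x|) : x - l * y ≠ 0 := by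
  intro h0
  rw [sub_eq_zero.1 h0, abs_mul] at h
  exact h rfl

lemma sub_mul_ne_zero_of_abs_lt {x y l : ℝ} (hl : 1 ≤ |l|) (h : |x| < |y|) : x - l * y ≠ 0 :=
  sub_mul_ne_zero_of_abs_mul_ne (h.trans_le (le_mul_of_one_le_left (abs_nonneg y) hl)).ne'

lemma sub_mul_ne_zero_of_mul_abs_lt {a x y l : ℝ} (hl : |l| ≤ a) (h : a * |y| < |x|) :
    x - l * y ≠ 0 :=
  sub_mul_ne_zero_of_abs_mul_ne
    ((mul_le_mul_of_nonneg_right hl (abs_nonneg y)).trans_lt h).ne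

lemma abs_mem_Icc_of_mem_union {a l : ℝ} (hl : l ∈ Icc (-a) (-1) ∪ Icc 1 a) : |l| ∈ Icc 1 a := by
  rcases hl with ⟨h₁, h₂⟩ | ⟨h₁, h₂⟩
  · rw [abs_of_neg (by linarith)]; constructor <;> linarith
  · rw [abs_of_pos (by linarith)]; exact ⟨h₁, h₂⟩

lemma sq_le_abs_div_of_abs_lt {a x y : ℝ} (ha : 1 ≤ a) (hxy : |x| < |y|) :
    a ^ 2 ≤ |x ^ 2 - a ^ 2 * y ^ 2| / |x ^ 2 - y ^ 2| := by
  have hsq : x ^ 2 < y ^ 2 := sq_lt_sq.2 hxy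
  have ha2 : 1 ≤ a ^ 2 := one_le_pow₀ ha
  rw [abs_of_neg (by nlinarith), abs_of_neg (by linarith), le_div_iff₀ (by linarith)]
  nlinarith [sq_nonneg x]

lemma one_le_abs_div_of_mul_abs_lt {a x y : ℝ} (ha : 1 ≤ a) (hxy : a * |y| < |x|) :
    1 ≤ |x ^ 2 - y ^ 2| / |x ^ 2 - a ^ 2 * y ^ 2| := by
  have hsq : a ^ 2 * y ^ 2 < x ^ 2 := by
    simpa only [mul_pow, sq_abs] using pow_lt_pow_left₀ hxy (by positivity) two_ne_zero
  have ha2 : 1 ≤ a ^ 2 := one_le_pow₀ ha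
  rw [abs_of_pos (by nlinarith [sq_nonneg y]), abs_of_pos (by linarith),
    one_le_div (by linarith)]
  nlinarith [sq_nonneg y]

lemma le_max_of_sq_le_mul_of_nonneg {a p q : ℝ} (hp : 0 ≤ p) (h : a ^ 2 ≤ p * q) :
    a ≤ max p q := by
  by_contra! hlt
  rw [max_lt_iff] at hlt
  nlinarith

lemma absCrossRatio_mul_absCrossRatio_neg (a b : ℝ) (u u' : ℝ × ℝ) :
    absCrossRatio a b u u' * absCrossRatio (-a) (-b) u u' =
      |u.1 ^ 2 - a ^ 2 * u.2 ^ 2| / |u.1 ^ 2 - b ^ 2 * u.2 ^ 2| *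
        (|u'.1 ^ 2 - b ^ 2 * u'.2 ^ 2| / |u'.1 ^ 2 - a ^ 2 * u'.2 ^ 2|) := by
  unfold absCrossRatio
  simp only [div_mul_div_comm, ← abs_mul]
  congr 2 <;> ring

lemma le_max_absCrossRatio {a : ℝ} (ha : 1 ≤ a) {u u' : ℝ × ℝ} (hu : |u.1| < |u.2|)
    (hu' : a * |u'.2| < |u'.1|) :
    a ≤ max (absCrossRatio a 1 u u') (absCrossRatio (-a) (-1) u u') := by
  refine le_max_of_sq_le_mul_of_nonneg (absCrossRatio_nonneg _ _ _ _) ?_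
  rw [absCrossRatio_mul_absCrossRatio_neg, one_pow, one_mul, one_mul]
  calc a ^ 2 = a ^ 2 * 1 := (mul_one _).symm
    _ ≤ _ := mul_le_mul (sq_le_abs_div_of_abs_lt ha hu) (one_le_abs_div_of_mul_abs_lt ha hu')
        zero_le_one (by positivity)

lemma absCrossRatio_zero_one_one_zero (l l' : ℝ) :
    absCrossRatio l l' (0, 1) (1, 0) = |l| / |l'| := by
  simp [absCrossRatio]

lemma projS_zero_one_one_zero {a : ℝ} {Λ : Set ℝ} (hΛ : ∀ l ∈ Λ, |l| ∈ Icc 1 a) (ha : a ∈ Λ)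
    (h1 : (1 : ℝ) ∈ Λ) : projS Λ (0, 1) (1, 0) = a := by
  rw [projS_eq_sSup_image]
  refine IsGreatest.csSup_eq ⟨⟨(a, 1), ⟨ha, h1⟩, ?_⟩, ?_⟩
  · dsimp only
    rw [absCrossRatio_zero_one_one_zero, abs_one, div_one, abs_of_pos]
    linarith [(hΛ a ha).1, (hΛ a ha).2]
  · rintro _ ⟨⟨l, l'⟩, ⟨hl, hl'⟩, rfl⟩
    obtain ⟨-, hla⟩ := hΛ l hl
    obtain ⟨hl'1, -⟩ := hΛ l' hl'
    dsimp only
    rw [absCrossRatio_zero_one_one_zero, div_le_iff₀ (by linarith)]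
    exact hla.trans (le_mul_of_one_le_right ((abs_nonneg l).trans hla) hl'1)

theorem distance_between_components
    (a : ℝ) (ha : 1 < a)
    (Λ : Set ℝ) (hΛc : IsCompact Λ)
    (hmem : {-a, -1, 1, a} ⊆ Λ)
    (hsub : Λ ⊆ Set.Icc (-a) (-1) ∪ Set.Icc 1 a) :
    (∀ u : ℝ × ℝ, |u.1| < |u.2| →
      ∀ u' : ℝ × ℝ, u' ≠ 0 → a * |u'.2| < |u'.1| → a ≤ projS Λ u u') ∧
    projS Λ (0, 1) (1, 0) = a := by
  have hΛ : ∀ l ∈ Λ, |l| ∈ Icc 1 a := fun l hl => abs_mem_Icc_of_mem_union (hsub hl)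
  obtain ⟨hna, hn1, h1, ha'⟩ : -a ∈ Λ ∧ -1 ∈ Λ ∧ 1 ∈ Λ ∧ a ∈ Λ := by
    simpa only [insert_subset_iff, singleton_subset_iff] using hmem
  refine ⟨fun u hu u' _ hu' => ?_, projS_zero_one_one_zero hΛ ha' h1⟩
  have hbdd := bddAbove_absCrossRatio_image hΛc
    (fun l hl => sub_mul_ne_zero_of_abs_lt (hΛ l hl).1 hu)
    (fun l hl => sub_mul_ne_zero_of_mul_abs_lt (hΛ l hl).2 hu')
  exact (le_max_absCrossRatio ha.le hu hu').trans
    (max_le (absCrossRatio_le_projS hbdd ha' h1) (absCrossRatio_le_projS hbdd hna hn1))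
end
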